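/- arXiv:2308.12374 — 4 statements merged into one kernel-verified Lean document; each statement's English description precedes it below -/
import Mathlib

section
/- With Ψ⁻¹(A,B) := ∑_{j=0}^{B−1} A^j, let D ≥ 1, d : [D] → ℕ₊, 0 < r ≤ 1, and h : [D] → ℝ nondecreasing with h ≥ 0. For every U ∈ [D], the quantity C := ∑_{ℓ=1}^{D} h(ℓ) r^{d_{[ℓ+1:D]}} Ψ⁻¹(r, d(ℓ)) satisfies C ≥ R(U), where R(U) := ∑_{ℓ=1}^{U−1} h(ℓ) r^{d_{[ℓ+1:D]}} Ψ⁻¹(r, d(ℓ)) + h(U) Ψ⁻¹(r, d_{[U:D]}) and d_{[a:b]} := ∑_{t=a}^{b} d(t) (0 if a > b). -/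
/-- `Ψ⁻¹(A, B) = ∑_{j=0}^{B−1} A^j`. -/
noncomputable def psiInv (A : ℝ) (B : ℕ) : ℝ := ∑ j ∈ Finset.range B, A ^ j

/-- `d_{[a:b]} = ∑_{t=a}^{b} d(t)` (0 if `a > b`). -/
def dSum (d : ℕ → ℕ) (a b : ℕ) : ℕ := ∑ t ∈ Finset.Icc a b, d t

/-!
Split `C` at `U`. Since `Ψ⁻¹(r, a + b) = Ψ⁻¹(r, a) + r^a Ψ⁻¹(r, b)`, peeling off `d(U), d(U+1), …`
gives `Ψ⁻¹(r, d_{[U:D]}) = ∑_{ℓ=U}^{D} r^{d_{[ℓ+1:D]}} Ψ⁻¹(r, d(ℓ))`, so the tail of `C` is this sum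
with the nonnegative weights `r^{d_{[ℓ+1:D]}} Ψ⁻¹(r, d(ℓ))` multiplied by `h(ℓ) ≥ h(U)`.
-/

open Finset

lemma psiInv_add (r : ℝ) (a b : ℕ) :
    psiInv r (a + b) = psiInv r a + r ^ a * psiInv r b := by
  simp only [psiInv, sum_range_add, mul_sum, pow_add]

lemma psiInv_nonneg {r : ℝ} (hr : 0 ≤ r) (b : ℕ) : 0 ≤ psiInv r b :=
  sum_nonneg fun j _ => pow_nonneg hr j

lemma dSum_eq_dSum_add_one_add (d : ℕ → ℕ) {a b : ℕ} (hab : a ≤ b) :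
    dSum d a b = dSum d (a + 1) b + d a := by
  rw [dSum, dSum, ← insert_Icc_add_one_left_eq_Icc hab, sum_insert (by simp), add_comm]

lemma psiInv_dSum_eq_sum (d : ℕ → ℕ) (r : ℝ) (a b : ℕ) :
    psiInv r (dSum d a b) = ∑ ℓ ∈ Icc a b, r ^ dSum d (ℓ + 1) b * psiInv r (d ℓ) := by
  rcases lt_or_ge b a with hba | hab
  · simp [dSum, psiInv, Icc_eq_empty_of_lt hba]
  · rw [dSum_eq_dSum_add_one_add d hab, psiInv_add, psiInv_dSum_eq_sum d r (a + 1) b,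
      ← insert_Icc_add_one_left_eq_Icc hab, sum_insert (by simp), add_comm]
termination_by b + 1 - a

lemma sum_Icc_eq_sum_Icc_sub_one_add_sum_Icc {M : Type*} [AddCommMonoid M] (f : ℕ → M)
    {a m b : ℕ} (ham : a ≤ m) (hmb : m ≤ b + 1) (hm : m ≠ 0) :
    ∑ i ∈ Icc a b, f i = ∑ i ∈ Icc a (m - 1), f i + ∑ i ∈ Icc m b, f i := by
  rw [← Ico_add_one_right_eq_Icc, ← Ico_add_one_right_eq_Icc, ← Ico_add_one_right_eq_Icc,
    Nat.sub_add_cancel (Nat.one_le_iff_ne_zero.mpr hm), sum_Ico_consecutive f ham hmb]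

lemma mul_sum_le_sum_mul_of_forall_le {ι R : Type*} [Semiring R] [PartialOrder R]
    [IsOrderedRing R] {s : Finset ι} {c : R} {g w : ι → R}
    (hc : ∀ i ∈ s, c ≤ g i) (hw : ∀ i ∈ s, 0 ≤ w i) :
    c * ∑ i ∈ s, w i ≤ ∑ i ∈ s, g i * w i := by
  rw [mul_sum]
  exact sum_le_sum fun i hi => mul_le_mul_of_nonneg_right (hc i hi) (hw i hi)

theorem stmt5_general (D : ℕ) (d : ℕ → ℕ)
    (r : ℝ) (hr0 : 0 < r) (h : ℕ → ℝ)
    (hmono : ∀ i ∈ Finset.Icc 1 D, ∀ j ∈ Finset.Icc 1 D, i ≤ j → h i ≤ h j)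
    (U : ℕ) (hU : U ∈ Finset.Icc 1 D) :
    ∑ ℓ ∈ Finset.Icc 1 (U - 1), h ℓ * r ^ dSum d (ℓ + 1) D * psiInv r (d ℓ)
        + h U * psiInv r (dSum d U D)
      ≤ ∑ ℓ ∈ Finset.Icc 1 D, h ℓ * r ^ dSum d (ℓ + 1) D * psiInv r (d ℓ) := by
  obtain ⟨hU1, hUD⟩ := mem_Icc.mp hU
  rw [sum_Icc_eq_sum_Icc_sub_one_add_sum_Icc (b := D) _ hU1 (by omega) (by omega),
    psiInv_dSum_eq_sum, add_le_add_iff_left]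
  simp only [mul_assoc]
  refine mul_sum_le_sum_mul_of_forall_le (fun ℓ hℓ => ?_)
    fun ℓ _ => mul_nonneg (pow_nonneg hr0.le _) (psiInv_nonneg hr0.le _)
  obtain ⟨hUℓ, hℓD⟩ := mem_Icc.mp hℓ
  exact hmono U hU ℓ (mem_Icc.mpr ⟨hU1.trans hUℓ, hℓD⟩) hUℓ

/-- Remark 3 (eq. (25)): for `h` nondecreasing and nonnegative on `[D]` and `0 < r ≤ 1`,
`C = ∑_{ℓ=1}^{D} h(ℓ) r^{d_{[ℓ+1:D]}} Ψ⁻¹(r,d(ℓ)) ≥ R(U)` for every `U ∈ [D]`. -/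
theorem stmt5 (D : ℕ) (hD : 1 ≤ D) (d : ℕ → ℕ)
    (hd : ∀ ℓ ∈ Finset.Icc 1 D, 1 ≤ d ℓ)
    (r : ℝ) (hr0 : 0 < r) (hr1 : r ≤ 1) (h : ℕ → ℝ)
    (hmono : ∀ i ∈ Finset.Icc 1 D, ∀ j ∈ Finset.Icc 1 D, i ≤ j → h i ≤ h j)
    (hpos : ∀ ℓ ∈ Finset.Icc 1 D, 0 ≤ h ℓ)
    (U : ℕ) (hU : U ∈ Finset.Icc 1 D) :
    ∑ ℓ ∈ Finset.Icc 1 (U - 1), h ℓ * r ^ dSum d (ℓ + 1) D * psiInv r (d ℓ)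
        + h U * psiInv r (dSum d U D)
      ≤ ∑ ℓ ∈ Finset.Icc 1 D, h ℓ * r ^ dSum d (ℓ + 1) D * psiInv r (d ℓ) :=
  stmt5_general D d r hr0 h hmono U hU
end

section
/- Let X, Y, Z be finite random variables with X → Y → Z a Markov chain componentwise over i.i.d. blocks of length N, let U^N = X^N G_N with G_N invertible over 𝔽₂, and for δ > 0 define H_{X|Y} := { i ∈ [N] : H(U_i | U^{i−1}, Y^N) ≥ δ } and H_{X|Z} := { i ∈ [N] : H(U_i | U^{i−1}, Z^N) ≥ δ }. Then H_{X|Y} ⊆ H_{X|Z}. -/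
open scoped Classical

/-- Probability `P[X = x]` of a finite random variable `X` under the pmf `p` on `Ω`. -/
noncomputable def pr {Ω α : Type} [Fintype Ω] (p : Ω → ℝ) (X : Ω → α) (x : α) : ℝ :=
  ∑ ω : Ω, if X ω = x then p ω else 0

/-- Shannon conditional entropy `H(X | Y)` (natural log) of finite random variables. -/
noncomputable def condEnt {Ω α β : Type} [Fintype Ω] [Fintype α] [Fintype β]
    (p : Ω → ℝ) (X : Ω → α) (Y : Ω → β) : ℝ :=
  -∑ x : α, ∑ y : β, pr p (fun ω => (X ω, Y ω)) (x, y) *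
      Real.log (pr p (fun ω => (X ω, Y ω)) (x, y) / pr p Y y)

/-- Shannon entropy `H(X)`. -/
noncomputable def ent {Ω α : Type} [Fintype Ω] [Fintype α] (p : Ω → ℝ) (X : Ω → α) : ℝ :=
  condEnt p X (fun _ => (0 : Fin 1))

/-- Conditional mutual information `I(X ; Y | Z) = H(X|Z) − H(X|Y,Z)`. -/
noncomputable def mutInfo {Ω α β γ : Type} [Fintype Ω] [Fintype α] [Fintype β] [Fintype γ]
    (p : Ω → ℝ) (X : Ω → α) (Y : Ω → β) (Z : Ω → γ) : ℝ :=
  condEnt p X Z - condEnt p X (fun ω => (Y ω, Z ω))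

section stmt12helpers
variable {Ω : Type} [Fintype Ω] {p : Ω → ℝ}

lemma pr_nonneg (hp0 : ∀ ω, 0 ≤ p ω) {α : Type} (X : Ω → α) (x : α) : 0 ≤ pr p X x :=
  Finset.sum_nonneg fun ω _ => by by_cases h : X ω = x <;> simp [pr, h, hp0 ω]

lemma pr_congr {α α' : Type} {F : Ω → α} {F' : Ω → α'} {a : α} {a' : α'}
    (h : ∀ ω, F ω = a ↔ F' ω = a') : pr p F a = pr p F' a' := by
  unfold pr
  refine Finset.sum_congr rfl fun ω _ => ?_
  by_cases hω : F ω = a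
  · rw [if_pos hω, if_pos ((h ω).1 hω)]
  · rw [if_neg hω, if_neg (fun hc => hω ((h ω).2 hc))]

lemma pr_mono (hp0 : ∀ ω, 0 ≤ p ω) {α β : Type} {F : Ω → α} {H : Ω → β} {a : α} {b : β}
    (himp : ∀ ω, F ω = a → H ω = b) : pr p F a ≤ pr p H b := by
  refine Finset.sum_le_sum fun ω _ => ?_
  by_cases hω : F ω = a
  · simp [hω, himp ω hω]
  · by_cases hω' : H ω = b <;> simp [hω, hω', hp0 ω]

lemma pr_comp' {α α' : Type} [Fintype α] (W : Ω → α) (h : α → α') (v : α') :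
    pr p (fun ω => h (W ω)) v = ∑ w ∈ Finset.univ.filter (fun w => h w = v), pr p W w := by
  unfold pr
  rw [Finset.sum_comm]
  refine Finset.sum_congr rfl fun ω _ => ?_
  by_cases hv : h (W ω) = v
  · rw [if_pos hv, Finset.sum_eq_single_of_mem (W ω) (by simp [hv])]
    · rw [if_pos rfl]
    · intro b _ hbn
      exact if_neg fun hh => hbn hh.symm
  · rw [if_neg hv, Finset.sum_eq_zero]
    intro w hw
    refine if_neg fun hh => hv ?_
    rw [hh]
    exact (Finset.mem_filter.1 hw).2

lemma pr_comp_pair {α α' κ : Type} [Fintype α] (W : Ω → α) (K : Ω → κ) (h : α → α')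
    (v : α') (k : κ) :
    pr p (fun ω => (h (W ω), K ω)) (v, k)
      = ∑ w ∈ Finset.univ.filter (fun w => h w = v), pr p (fun ω => (W ω, K ω)) (w, k) := by
  unfold pr
  rw [Finset.sum_comm]
  refine Finset.sum_congr rfl fun ω _ => ?_
  by_cases hv : (h (W ω), K ω) = (v, k)
  · have h1 : h (W ω) = v := congrArg Prod.fst hv
    have h2 : K ω = k := congrArg Prod.snd hv
    rw [if_pos hv, Finset.sum_eq_single_of_mem (W ω) (by simp [h1])]
    · rw [if_pos (show (W ω, K ω) = (W ω, k) by rw [h2])]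
    · intro b _ hbn
      refine if_neg fun hh => hbn ?_
      have : (W ω, K ω) = (b, k) := hh
      exact ((Prod.ext_iff.1 this).1).symm
  · rw [if_neg hv, Finset.sum_eq_zero]
    intro w hw
    refine if_neg fun hh => hv ?_
    have hh' : (W ω, K ω) = (w, k) := hh
    have h1 : W ω = w := (Prod.ext_iff.1 hh').1
    have h3 : h w = v := (Finset.mem_filter.1 hw).2
    have h2 : K ω = k := (Prod.ext_iff.1 hh').2
    show (h (W ω), K ω) = (v, k)
    rw [h2, h1, h3]

lemma pr_comp_pair' {α α' κ : Type} [Fintype α] (W : Ω → α) (K : Ω → κ) (h : α → α')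
    (v : α') (k : κ) :
    pr p (fun ω => (K ω, h (W ω))) (k, v)
      = ∑ w ∈ Finset.univ.filter (fun w => h w = v), pr p (fun ω => (K ω, W ω)) (k, w) := by
  rw [pr_congr (F' := fun ω => (h (W ω), K ω)) (a' := (v, k))
    (fun ω => by constructor <;> (intro hh; simp [Prod.ext_iff] at hh ⊢; tauto))]
  rw [pr_comp_pair]
  exact Finset.sum_congr rfl fun w _ => pr_congr fun ω => by
    constructor <;> (intro hh; simp [Prod.ext_iff] at hh ⊢; tauto)

lemma pr_marg {α β : Type} [Fintype β] (A : Ω → α) (B : Ω → β) (a : α) :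
    ∑ b : β, pr p (fun ω => (A ω, B ω)) (a, b) = pr p A a := by
  unfold pr
  rw [Finset.sum_comm]
  refine Finset.sum_congr rfl fun ω _ => ?_
  by_cases hA : A ω = a
  · rw [Finset.sum_eq_single (B ω), if_pos (show (A ω, B ω) = (a, B ω) by rw [hA]), if_pos hA]
    · intro b _ hbn
      refine if_neg fun hh => hbn ?_
      have : (A ω, B ω) = (a, b) := hh
      exact ((Prod.ext_iff.1 this).2).symm
    · intro hm; exact absurd (Finset.mem_univ _) hm
  · rw [if_neg hA, Finset.sum_eq_zero]
    intro b _
    refine if_neg fun hh => hA ?_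
    have : (A ω, B ω) = (a, b) := hh
    exact (Prod.ext_iff.1 this).1

lemma pr_marg_fst {α β : Type} [Fintype α] (A : Ω → α) (B : Ω → β) (b : β) :
    ∑ a : α, pr p (fun ω => (A ω, B ω)) (a, b) = pr p B b := by
  unfold pr
  rw [Finset.sum_comm]
  refine Finset.sum_congr rfl fun ω _ => ?_
  by_cases hB : B ω = b
  · rw [Finset.sum_eq_single (A ω), if_pos (show (A ω, B ω) = (A ω, b) by rw [hB]), if_pos hB]
    · intro a _ hbn
      refine if_neg fun hh => hbn ?_
      have : (A ω, B ω) = (a, b) := hh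
      exact ((Prod.ext_iff.1 this).1).symm
    · intro hm; exact absurd (Finset.mem_univ _) hm
  · rw [if_neg hB, Finset.sum_eq_zero]
    intro a _
    refine if_neg fun hh => hB ?_
    have : (A ω, B ω) = (a, b) := hh
    exact (Prod.ext_iff.1 this).2

lemma condEnt_comp_eq {α β β' : Type} [Fintype α] [Fintype β] [Fintype β']
    (hp0 : ∀ ω, 0 ≤ p ω) (X : Ω → α) (W : Ω → β) (g : β → β')
    (hCI : ∀ (x : α) (w : β), pr p (fun ω => (X ω, W ω)) (x, w) * pr p (fun ω => g (W ω)) (g w)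
      = pr p (fun ω => (X ω, g (W ω))) (x, g w) * pr p W w) :
    condEnt p X W = condEnt p X (fun ω => g (W ω)) := by
  unfold condEnt
  beta_reduce
  congr 1
  refine Finset.sum_congr rfl fun x _ => ?_
  have hQ : ∀ v, pr p (fun ω => (X ω, g (W ω))) (x, v)
      = ∑ w ∈ Finset.univ.filter (fun w => g w = v), pr p (fun ω => (X ω, W ω)) (x, w) :=
    fun v => pr_comp_pair' W X g v x
  have hterm : ∀ w : β, pr p (fun ω => (X ω, W ω)) (x, w) *
        Real.log (pr p (fun ω => (X ω, W ω)) (x, w) / pr p W w)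
      = pr p (fun ω => (X ω, W ω)) (x, w) *
        Real.log (pr p (fun ω => (X ω, g (W ω))) (x, g w) / pr p (fun ω => g (W ω)) (g w)) := by
    intro w
    by_cases hP : pr p (fun ω => (X ω, W ω)) (x, w) = 0
    · rw [hP]; ring
    · have hPpos : 0 < pr p (fun ω => (X ω, W ω)) (x, w) :=
        lt_of_le_of_ne (pr_nonneg hp0 _ _) (Ne.symm hP)
      have hPw : pr p (fun ω => (X ω, W ω)) (x, w) ≤ pr p W w :=
        pr_mono hp0 fun ω h => (Prod.ext_iff.1 h).2
      have hPQ : pr p (fun ω => (X ω, W ω)) (x, w) ≤ pr p (fun ω => (X ω, g (W ω))) (x, g w) :=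
        pr_mono hp0 fun ω h => by
          have h' : (X ω, W ω) = (x, w) := h
          simp only [Prod.mk.injEq] at h'
          show (X ω, g (W ω)) = (x, g w)
          rw [h'.1, h'.2]
      have hPwQv : pr p W w ≤ pr p (fun ω => g (W ω)) (g w) :=
        pr_mono hp0 fun ω h => by rw [h]
      have hPwpos : 0 < pr p W w := lt_of_lt_of_le hPpos hPw
      have hQpos : 0 < pr p (fun ω => (X ω, g (W ω))) (x, g w) := lt_of_lt_of_le hPpos hPQ
      have hQvpos : 0 < pr p (fun ω => g (W ω)) (g w) := lt_of_lt_of_le hPwpos hPwQv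
      have hdiv : pr p (fun ω => (X ω, W ω)) (x, w) / pr p W w
          = pr p (fun ω => (X ω, g (W ω))) (x, g w) / pr p (fun ω => g (W ω)) (g w) := by
        rw [div_eq_div_iff hPwpos.ne' hQvpos.ne']
        exact hCI x w
      rw [hdiv]
  rw [Finset.sum_congr rfl fun w _ => hterm w,
    ← Finset.sum_fiberwise Finset.univ g
      (fun w => pr p (fun ω => (X ω, W ω)) (x, w) *
        Real.log (pr p (fun ω => (X ω, g (W ω))) (x, g w) / pr p (fun ω => g (W ω)) (g w)))]
  refine Finset.sum_congr rfl fun v _ => ?_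
  refine Eq.trans (Finset.sum_congr rfl fun w hw => by rw [(Finset.mem_filter.1 hw).2]) ?_
  rw [← Finset.sum_mul, ← hQ v]

lemma condEnt_comp_le {α β β' : Type} [Fintype α] [Fintype β] [Fintype β']
    (hp0 : ∀ ω, 0 ≤ p ω) (X : Ω → α) (W : Ω → β) (g : β → β') :
    condEnt p X W ≤ condEnt p X (fun ω => g (W ω)) := by
  unfold condEnt
  beta_reduce
  rw [neg_le_neg_iff]
  refine Finset.sum_le_sum fun x _ => ?_
  have hQ : ∀ v, pr p (fun ω => (X ω, g (W ω))) (x, v)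
      = ∑ w ∈ Finset.univ.filter (fun w => g w = v), pr p (fun ω => (X ω, W ω)) (x, w) :=
    fun v => pr_comp_pair' W X g v x
  have hQv : ∀ v, pr p (fun ω => g (W ω)) v
      = ∑ w ∈ Finset.univ.filter (fun w => g w = v), pr p W w :=
    fun v => pr_comp' W g v
  have hL : (∑ w : β, pr p (fun ω => (X ω, W ω)) (x, w) *
        Real.log (pr p (fun ω => (X ω, g (W ω))) (x, g w) / pr p (fun ω => g (W ω)) (g w)))
      = ∑ v : β', pr p (fun ω => (X ω, g (W ω))) (x, v) *
        Real.log (pr p (fun ω => (X ω, g (W ω))) (x, v) / pr p (fun ω => g (W ω)) v) := by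
    rw [← Finset.sum_fiberwise Finset.univ g
      (fun w => pr p (fun ω => (X ω, W ω)) (x, w) *
        Real.log (pr p (fun ω => (X ω, g (W ω))) (x, g w) / pr p (fun ω => g (W ω)) (g w)))]
    refine Finset.sum_congr rfl fun v _ => ?_
    refine Eq.trans (Finset.sum_congr rfl fun w hw => by rw [(Finset.mem_filter.1 hw).2]) ?_
    rw [← Finset.sum_mul, ← hQ v]
  rw [← hL]
  have hcorr0 : (∑ w : β, (pr p (fun ω => (X ω, W ω)) (x, w)
      - pr p W w * (pr p (fun ω => (X ω, g (W ω))) (x, g w) / pr p (fun ω => g (W ω)) (g w))))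
      = 0 := by
    have e1 : (∑ w : β, pr p (fun ω => (X ω, W ω)) (x, w))
        = ∑ v : β', pr p (fun ω => (X ω, g (W ω))) (x, v) := by
      rw [← Finset.sum_fiberwise Finset.univ g (fun w => pr p (fun ω => (X ω, W ω)) (x, w))]
      exact Finset.sum_congr rfl fun v _ => (hQ v).symm
    have e2 : (∑ w : β, pr p W w *
          (pr p (fun ω => (X ω, g (W ω))) (x, g w) / pr p (fun ω => g (W ω)) (g w)))
        = ∑ v : β', pr p (fun ω => (X ω, g (W ω))) (x, v) := by
      rw [← Finset.sum_fiberwise Finset.univ g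
        (fun w => pr p W w *
          (pr p (fun ω => (X ω, g (W ω))) (x, g w) / pr p (fun ω => g (W ω)) (g w)))]
      refine Finset.sum_congr rfl fun v _ => ?_
      refine Eq.trans (Finset.sum_congr rfl fun w hw => by rw [(Finset.mem_filter.1 hw).2]) ?_
      rw [← Finset.sum_mul, ← hQv v]
      by_cases hv : pr p (fun ω => g (W ω)) v = 0
      · have hQle : pr p (fun ω => (X ω, g (W ω))) (x, v) ≤ pr p (fun ω => g (W ω)) v :=
          pr_mono hp0 fun ω h => by
            have h' : (X ω, g (W ω)) = (x, v) := h
            exact (Prod.ext_iff.1 h').2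
        have hQ0 : pr p (fun ω => (X ω, g (W ω))) (x, v) = 0 :=
          le_antisymm (hv ▸ hQle) (pr_nonneg hp0 _ _)
        rw [hv, hQ0]
        simp
      · rw [mul_comm, div_mul_cancel₀ _ hv]
    rw [Finset.sum_sub_distrib, e1, e2, sub_self]
  have key : ∀ w : β, pr p (fun ω => (X ω, W ω)) (x, w) *
        Real.log (pr p (fun ω => (X ω, g (W ω))) (x, g w) / pr p (fun ω => g (W ω)) (g w))
      + (pr p (fun ω => (X ω, W ω)) (x, w)
        - pr p W w * (pr p (fun ω => (X ω, g (W ω))) (x, g w) / pr p (fun ω => g (W ω)) (g w)))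
      ≤ pr p (fun ω => (X ω, W ω)) (x, w) *
          Real.log (pr p (fun ω => (X ω, W ω)) (x, w) / pr p W w) := by
    intro w
    by_cases hP : pr p (fun ω => (X ω, W ω)) (x, w) = 0
    · have h1 : 0 ≤ pr p W w := pr_nonneg hp0 _ _
      have h2 : 0 ≤ pr p (fun ω => (X ω, g (W ω))) (x, g w) / pr p (fun ω => g (W ω)) (g w) :=
        div_nonneg (pr_nonneg hp0 _ _) (pr_nonneg hp0 _ _)
      rw [hP]
      simp only [zero_mul, zero_add, zero_sub]
      linarith [mul_nonneg h1 h2]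
    · have hPpos : 0 < pr p (fun ω => (X ω, W ω)) (x, w) :=
        lt_of_le_of_ne (pr_nonneg hp0 _ _) (Ne.symm hP)
      have hPw : pr p (fun ω => (X ω, W ω)) (x, w) ≤ pr p W w :=
        pr_mono hp0 fun ω h => by
          have h' : (X ω, W ω) = (x, w) := h
          exact (Prod.ext_iff.1 h').2
      have hPQ : pr p (fun ω => (X ω, W ω)) (x, w)
          ≤ pr p (fun ω => (X ω, g (W ω))) (x, g w) :=
        pr_mono hp0 fun ω h => by
          have h' : (X ω, W ω) = (x, w) := h
          simp only [Prod.mk.injEq] at h'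
          show (X ω, g (W ω)) = (x, g w)
          rw [h'.1, h'.2]
      have hPwQv : pr p W w ≤ pr p (fun ω => g (W ω)) (g w) :=
        pr_mono hp0 fun ω h => by rw [h]
      have hPwpos : 0 < pr p W w := lt_of_lt_of_le hPpos hPw
      have hQpos : 0 < pr p (fun ω => (X ω, g (W ω))) (x, g w) := lt_of_lt_of_le hPpos hPQ
      have hQvpos : 0 < pr p (fun ω => g (W ω)) (g w) := lt_of_lt_of_le hPwpos hPwQv
      set P := pr p (fun ω => (X ω, W ω)) (x, w) with hPdef
      set Pw := pr p W w with hPwdef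
      set Q := pr p (fun ω => (X ω, g (W ω))) (x, g w) with hQdef
      set Qv := pr p (fun ω => g (W ω)) (g w) with hQvdef
      have hlog := Real.log_le_sub_one_of_pos
        (show 0 < (Pw * Q) / (P * Qv) by positivity)
      have hlogeq : Real.log ((Pw * Q)/(P * Qv))
          = Real.log (Q / Qv) - Real.log (P / Pw) := by
        rw [Real.log_div (mul_pos hPwpos hQpos).ne' (mul_pos hPpos hQvpos).ne',
          Real.log_mul hPwpos.ne' hQpos.ne', Real.log_mul hPpos.ne' hQvpos.ne',
          Real.log_div hQpos.ne' hQvpos.ne', Real.log_div hPpos.ne' hPwpos.ne']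
        ring
      have h2 : P * (Real.log (Q / Qv) - Real.log (P / Pw))
          ≤ P * ((Pw * Q) / (P * Qv) - 1) :=
        mul_le_mul_of_nonneg_left (by rw [← hlogeq]; exact hlog) hPpos.le
      have h3 : P * ((Pw * Q) / (P * Qv)) = Pw * (Q / Qv) := by
        field_simp
      rw [mul_sub, mul_sub] at h2
      linarith [h2, h3]
  calc (∑ w : β, pr p (fun ω => (X ω, W ω)) (x, w) *
        Real.log (pr p (fun ω => (X ω, g (W ω))) (x, g w) / pr p (fun ω => g (W ω)) (g w)))
      = ∑ w : β, (pr p (fun ω => (X ω, W ω)) (x, w) *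
          Real.log (pr p (fun ω => (X ω, g (W ω))) (x, g w) / pr p (fun ω => g (W ω)) (g w))
        + (pr p (fun ω => (X ω, W ω)) (x, w)
          - pr p W w * (pr p (fun ω => (X ω, g (W ω))) (x, g w)
            / pr p (fun ω => g (W ω)) (g w)))) := by
        rw [Finset.sum_add_distrib, hcorr0, add_zero]
    _ ≤ ∑ w : β, pr p (fun ω => (X ω, W ω)) (x, w) *
          Real.log (pr p (fun ω => (X ω, W ω)) (x, w) / pr p W w) :=
        Finset.sum_le_sum fun w _ => key w

lemma markov_pr {β γ : Type} [Fintype β] [Fintype γ]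
    {N : ℕ} (XN : Ω → Fin N → ZMod 2) (YN : Ω → Fin N → β) (ZN : Ω → Fin N → γ)
    (q : ZMod 2 × β × γ → ℝ)
    (hiid : ∀ (x : Fin N → ZMod 2) (y : Fin N → β) (z : Fin N → γ),
      pr p (fun ω => (XN ω, YN ω, ZN ω)) (x, y, z) = ∏ i : Fin N, q (x i, y i, z i))
    (hMarkov : ∀ (x : ZMod 2) (y : β) (z : γ),
      q (x, y, z) * (∑ x' : ZMod 2, ∑ z' : γ, q (x', y, z'))
        = (∑ z' : γ, q (x, y, z')) * (∑ x' : ZMod 2, q (x', y, z)))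
    {α : Type} (f : (Fin N → ZMod 2) → α) (v : α) (y : Fin N → β) (z : Fin N → γ) :
    pr p (fun ω => (f (XN ω), YN ω, ZN ω)) (v, y, z) * pr p YN y
      = pr p (fun ω => (f (XN ω), YN ω)) (v, y) * pr p (fun ω => (YN ω, ZN ω)) (y, z) := by
  have hxyz : ∀ (x : Fin N → ZMod 2), pr p (fun ω => (XN ω, YN ω, ZN ω)) (x, y, z)
      = ∏ i : Fin N, q (x i, y i, z i) := fun x => hiid x y z
  have hXY : ∀ (x : Fin N → ZMod 2), pr p (fun ω => (XN ω, YN ω)) (x, y)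
      = ∏ i : Fin N, ∑ z' : γ, q (x i, y i, z') := by
    intro x
    have hm := pr_marg (p := p) (fun ω => (XN ω, YN ω)) ZN (x, y)
    have hsh : ∀ z0 : Fin N → γ,
        pr p (fun ω => ((XN ω, YN ω), ZN ω)) ((x, y), z0)
          = pr p (fun ω => (XN ω, YN ω, ZN ω)) (x, y, z0) := fun z0 =>
      pr_congr fun ω => by
        constructor <;> (intro hh; simp only [Prod.mk.injEq] at hh ⊢; tauto)
    rw [← hm]
    calc (∑ z0 : Fin N → γ, pr p (fun ω => ((XN ω, YN ω), ZN ω)) ((x, y), z0))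
        = ∑ z0 : Fin N → γ, ∏ i : Fin N, q (x i, y i, z0 i) := by
          refine Finset.sum_congr rfl fun z0 _ => ?_
          rw [hsh z0]
          exact hiid x y z0
      _ = ∏ i : Fin N, ∑ z' : γ, q (x i, y i, z') :=
          (Fintype.prod_sum fun i z' => q (x i, y i, z')).symm
  have hY : pr p YN y = ∏ i : Fin N, ∑ x' : ZMod 2, ∑ z' : γ, q (x', y i, z') := by
    rw [← pr_marg_fst XN YN y]
    calc (∑ x : Fin N → ZMod 2, pr p (fun ω => (XN ω, YN ω)) (x, y))
        = ∑ x : Fin N → ZMod 2, ∏ i : Fin N, ∑ z' : γ, q (x i, y i, z') :=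
          Finset.sum_congr rfl fun x _ => hXY x
      _ = ∏ i : Fin N, ∑ x' : ZMod 2, ∑ z' : γ, q (x', y i, z') :=
          (Fintype.prod_sum fun i x' => ∑ z' : γ, q (x', y i, z')).symm
  have hYZ : pr p (fun ω => (YN ω, ZN ω)) (y, z)
      = ∏ i : Fin N, ∑ x' : ZMod 2, q (x', y i, z i) := by
    rw [← pr_marg_fst XN (fun ω => (YN ω, ZN ω)) (y, z)]
    calc (∑ x : Fin N → ZMod 2, pr p (fun ω => (XN ω, YN ω, ZN ω)) (x, y, z))
        = ∑ x : Fin N → ZMod 2, ∏ i : Fin N, q (x i, y i, z i) :=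
          Finset.sum_congr rfl fun x _ => hxyz x
      _ = ∏ i : Fin N, ∑ x' : ZMod 2, q (x', y i, z i) :=
          (Fintype.prod_sum fun i x' => q (x', y i, z i)).symm
  rw [pr_comp_pair XN (fun ω => (YN ω, ZN ω)) f v (y, z),
    pr_comp_pair XN YN f v y, hY, hYZ]
  rw [Finset.sum_mul, Finset.sum_mul]
  refine Finset.sum_congr rfl fun x _ => ?_
  rw [hxyz x, hXY x, ← Finset.prod_mul_distrib, ← Finset.prod_mul_distrib]
  exact Finset.prod_congr rfl fun i _ => hMarkov (x i) (y i) (z i)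

end stmt12helpers
/-- Lemma 3 (nesting of polar high-entropy index sets): if `(X^N, Y^N, Z^N)` is i.i.d. with
each component satisfying the Markov chain `X → Y → Z`
(`q(x,y,z)·q_Y(y) = q_{XY}(x,y)·q_{YZ}(y,z)`), and `U^N = G(X^N)` with `G` an invertible
linear transform over 𝔽₂, then for any `δ > 0`,
`{i : H(U_i|U^{i−1},Y^N) ≥ δ} ⊆ {i : H(U_i|U^{i−1},Z^N) ≥ δ}`. -/
theorem stmt12 {Ω β γ : Type} [Fintype Ω] [Fintype β] [Fintype γ]
    (p : Ω → ℝ) (hp0 : ∀ ω, 0 ≤ p ω) (hp1 : ∑ ω : Ω, p ω = 1)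
    (N : ℕ) (hN : 1 ≤ N)
    (XN : Ω → Fin N → ZMod 2) (YN : Ω → Fin N → β) (ZN : Ω → Fin N → γ)
    (q : ZMod 2 × β × γ → ℝ)
    (hiid : ∀ (x : Fin N → ZMod 2) (y : Fin N → β) (z : Fin N → γ),
      pr p (fun ω => (XN ω, YN ω, ZN ω)) (x, y, z) = ∏ i : Fin N, q (x i, y i, z i))
    (hMarkov : ∀ (x : ZMod 2) (y : β) (z : γ),
      q (x, y, z) * (∑ x' : ZMod 2, ∑ z' : γ, q (x', y, z'))
        = (∑ z' : γ, q (x, y, z')) * (∑ x' : ZMod 2, q (x', y, z)))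
    (G : (Fin N → ZMod 2) ≃ₗ[ZMod 2] (Fin N → ZMod 2))
    (U : Ω → Fin N → ZMod 2) (hU : ∀ ω, U ω = G (XN ω))
    (δ : ℝ) (hδ : 0 < δ) :
    {i : Fin N | δ ≤ condEnt p (fun ω => U ω i)
        (fun ω => ((fun j : Fin i.val => U ω (Fin.castLE i.isLt.le j)), YN ω))}
      ⊆ {i : Fin N | δ ≤ condEnt p (fun ω => U ω i)
          (fun ω => ((fun j : Fin i.val => U ω (Fin.castLE i.isLt.le j)), ZN ω))} := by
  intro i hi
  simp only [Set.mem_setOf_eq] at hi ⊢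
  -- conditional independence of ((U_i, U^{i-1}), anything measurable in X) from Z given Y
  have hCI : ∀ (x : ZMod 2)
      (w : (Fin i.val → ZMod 2) × (Fin N → β) × (Fin N → γ)),
      pr p (fun ω => ((fun ω => U ω i) ω,
          (fun ω => ((fun j : Fin i.val => U ω (Fin.castLE i.isLt.le j)), YN ω, ZN ω)) ω))
          (x, w)
        * pr p (fun ω => (fun t : (Fin i.val → ZMod 2) × (Fin N → β) × (Fin N → γ) =>
            (t.1, t.2.1)) ((fun ω => ((fun j : Fin i.val => U ω (Fin.castLE i.isLt.le j)),
            YN ω, ZN ω)) ω)) ((fun t : (Fin i.val → ZMod 2) × (Fin N → β) × (Fin N → γ) =>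
            (t.1, t.2.1)) w)
      = pr p (fun ω => ((fun ω => U ω i) ω,
          (fun t : (Fin i.val → ZMod 2) × (Fin N → β) × (Fin N → γ) => (t.1, t.2.1))
            ((fun ω => ((fun j : Fin i.val => U ω (Fin.castLE i.isLt.le j)), YN ω, ZN ω)) ω)))
          (x, (fun t : (Fin i.val → ZMod 2) × (Fin N → β) × (Fin N → γ) => (t.1, t.2.1)) w)
        * pr p (fun ω => ((fun j : Fin i.val => U ω (Fin.castLE i.isLt.le j)), YN ω, ZN ω)) w := by
    rintro x ⟨a, y, z⟩
    show pr p (fun ω => (U ω i, (fun j : Fin i.val => U ω (Fin.castLE i.isLt.le j)), YN ω, ZN ω))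
          (x, a, y, z)
        * pr p (fun ω => ((fun j : Fin i.val => U ω (Fin.castLE i.isLt.le j)), YN ω)) (a, y)
      = pr p (fun ω => (U ω i, (fun j : Fin i.val => U ω (Fin.castLE i.isLt.le j)), YN ω))
          (x, a, y)
        * pr p (fun ω => ((fun j : Fin i.val => U ω (Fin.castLE i.isLt.le j)), YN ω, ZN ω))
          (a, y, z)
    have e1 : pr p (fun ω => (U ω i, (fun j : Fin i.val => U ω (Fin.castLE i.isLt.le j)),
          YN ω, ZN ω)) (x, a, y, z)
        = pr p (fun ω => ((fun xv => ((G xv) i, fun j : Fin i.val => (G xv) (Fin.castLE i.isLt.le j)))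
            (XN ω), YN ω, ZN ω)) ((x, a), y, z) :=
      pr_congr fun ω => by
        constructor <;> (intro hh; simp only [Prod.mk.injEq, hU] at hh ⊢; tauto)
    have e2 : pr p (fun ω => ((fun j : Fin i.val => U ω (Fin.castLE i.isLt.le j)), YN ω, ZN ω))
          (a, y, z)
        = pr p (fun ω => ((fun xv => (fun j : Fin i.val => (G xv) (Fin.castLE i.isLt.le j)))
            (XN ω), YN ω, ZN ω)) (a, y, z) :=
      pr_congr fun ω => by
        constructor <;> (intro hh; simp only [Prod.mk.injEq, hU] at hh ⊢; tauto)
    have e3 : pr p (fun ω => (U ω i, (fun j : Fin i.val => U ω (Fin.castLE i.isLt.le j)), YN ω))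
          (x, a, y)
        = pr p (fun ω => ((fun xv => ((G xv) i, fun j : Fin i.val => (G xv) (Fin.castLE i.isLt.le j)))
            (XN ω), YN ω)) ((x, a), y) :=
      pr_congr fun ω => by
        constructor <;> (intro hh; simp only [Prod.mk.injEq, hU] at hh ⊢; tauto)
    have e4 : pr p (fun ω => ((fun j : Fin i.val => U ω (Fin.castLE i.isLt.le j)), YN ω)) (a, y)
        = pr p (fun ω => ((fun xv => (fun j : Fin i.val => (G xv) (Fin.castLE i.isLt.le j)))
            (XN ω), YN ω)) (a, y) :=
      pr_congr fun ω => by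
        constructor <;> (intro hh; simp only [Prod.mk.injEq, hU] at hh ⊢; tauto)
    have M1 := markov_pr (p := p) XN YN ZN q hiid hMarkov
      (fun xv => ((G xv) i, fun j : Fin i.val => (G xv) (Fin.castLE i.isLt.le j))) (x, a) y z
    have M2 := markov_pr (p := p) XN YN ZN q hiid hMarkov
      (fun xv => (fun j : Fin i.val => (G xv) (Fin.castLE i.isLt.le j))) a y z
    rw [e1, e2, e3, e4]
    by_cases hy : pr p YN y = 0
    · have hP0 : pr p (fun ω => ((fun xv => ((G xv) i,
            fun j : Fin i.val => (G xv) (Fin.castLE i.isLt.le j))) (XN ω), YN ω, ZN ω))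
            ((x, a), y, z) = 0 := by
        refine le_antisymm (hy ▸ ?_) (pr_nonneg hp0 _ _)
        refine pr_mono hp0 fun ω h => ?_
        have h' : ((fun xv => ((G xv) i, fun j : Fin i.val => (G xv) (Fin.castLE i.isLt.le j)))
            (XN ω), YN ω, ZN ω) = ((x, a), y, z) := h
        simp only [Prod.mk.injEq] at h'
        exact h'.2.1
      have hT0 : pr p (fun ω => ((fun xv => (fun j : Fin i.val => (G xv) (Fin.castLE i.isLt.le j)))
            (XN ω), YN ω, ZN ω)) (a, y, z) = 0 := by
        refine le_antisymm (hy ▸ ?_) (pr_nonneg hp0 _ _)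
        refine pr_mono hp0 fun ω h => ?_
        have h' : ((fun xv => (fun j : Fin i.val => (G xv) (Fin.castLE i.isLt.le j)))
            (XN ω), YN ω, ZN ω) = (a, y, z) := h
        simp only [Prod.mk.injEq] at h'
        exact h'.2.1
      rw [hP0, hT0, zero_mul, mul_zero]
    · refine mul_right_cancel₀ hy ?_
      linear_combination (pr p (fun ω => ((fun xv => (fun j : Fin i.val =>
          (G xv) (Fin.castLE i.isLt.le j))) (XN ω), YN ω)) (a, y)) * M1
        - (pr p (fun ω => ((fun xv => ((G xv) i, fun j : Fin i.val =>
          (G xv) (Fin.castLE i.isLt.le j))) (XN ω), YN ω)) ((x, a), y)) * M2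
  have heq := condEnt_comp_eq hp0 (fun ω => U ω i)
    (fun ω => ((fun j : Fin i.val => U ω (Fin.castLE i.isLt.le j)), YN ω, ZN ω))
    (fun t => (t.1, t.2.1)) hCI
  have hle := condEnt_comp_le hp0 (fun ω => U ω i)
    (fun ω => ((fun j : Fin i.val => U ω (Fin.castLE i.isLt.le j)), YN ω, ZN ω))
    (fun t => (t.1, t.2.2))
  calc δ ≤ condEnt p (fun ω => U ω i)
        (fun ω => ((fun t : (Fin i.val → ZMod 2) × (Fin N → β) × (Fin N → γ) => (t.1, t.2.1))
          ((fun j : Fin i.val => U ω (Fin.castLE i.isLt.le j)), YN ω, ZN ω))) := hi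
    _ = condEnt p (fun ω => U ω i)
        (fun ω => ((fun j : Fin i.val => U ω (Fin.castLE i.isLt.le j)), YN ω, ZN ω)) := heq.symm
    _ ≤ condEnt p (fun ω => U ω i)
        (fun ω => ((fun t : (Fin i.val → ZMod 2) × (Fin N → β) × (Fin N → γ) => (t.1, t.2.2))
          ((fun j : Fin i.val => U ω (Fin.castLE i.isLt.le j)), YN ω, ZN ω))) := hle
    _ = condEnt p (fun ω => U ω i)
        (fun ω => ((fun j : Fin i.val => U ω (Fin.castLE i.isLt.le j)), ZN ω)) := rfl
end

section
/- Let A, Q, X, Y, M, Z be finite random variables such that H(A | Q, X) = 0 (the answer A is a deterministic function of the query Q and database X) and I(Q'; X | Y, M, Z) = 0 for the full query tuple Q' containing Q. Then I(A; Q'' | Q, Y, X', Z, M) = 0 for any Q'' that is part of Q' and any X' that is a function of X. -/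
open scoped Classical

section basic
variable {Ω : Type} [Fintype Ω] {p : Ω → ℝ}

lemma pr_eq_of_iff {α β : Type} (X : Ω → α) (Y : Ω → β) (x : α) (y : β)
    (h : ∀ ω, X ω = x ↔ Y ω = y) : pr p X x = pr p Y y := by
  unfold pr; apply Finset.sum_congr rfl; intro ω _
  by_cases hx : X ω = x
  · rw [if_pos hx, if_pos ((h ω).mp hx)]
  · rw [if_neg hx, if_neg (fun hy => hx ((h ω).mpr hy))]

lemma pr_mono_s13 (hp0 : ∀ ω, 0 ≤ p ω) {α β : Type} (X : Ω → α) (Y : Ω → β) (x : α) (y : β)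
    (h : ∀ ω, X ω = x → Y ω = y) : pr p X x ≤ pr p Y y := by
  apply Finset.sum_le_sum; intro ω _
  by_cases hx : X ω = x
  · rw [if_pos hx, if_pos (h ω hx)]
  · rw [if_neg hx]; split
    · exact hp0 ω
    · exact le_refl 0

lemma sum_pr_fst {α β : Type} [Fintype α] (X : Ω → α) (Y : Ω → β) (y : β) :
    ∑ x : α, pr p (fun ω => (X ω, Y ω)) (x, y) = pr p Y y := by
  unfold pr
  rw [Finset.sum_comm]
  refine Finset.sum_congr rfl fun ω _ => ?_
  simp [Prod.ext_iff, ite_and, Finset.sum_ite_eq]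

lemma sum_pr_snd {α β : Type} [Fintype β] (X : Ω → α) (Y : Ω → β) (x : α) :
    ∑ y : β, pr p (fun ω => (X ω, Y ω)) (x, y) = pr p X x := by
  unfold pr
  rw [Finset.sum_comm]
  refine Finset.sum_congr rfl fun ω _ => ?_
  simp [Prod.ext_iff, ite_and, Finset.sum_ite_eq]

lemma sum_pr_total {α : Type} [Fintype α] (hp1 : ∑ ω : Ω, p ω = 1) (X : Ω → α) :
    ∑ x : α, pr p X x = 1 := by
  unfold pr
  rw [Finset.sum_comm, ← hp1]
  refine Finset.sum_congr rfl fun ω _ => ?_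
  simp [Finset.sum_ite_eq]

end basic

section ent
variable {Ω : Type} [Fintype Ω] {p : Ω → ℝ}
variable {α β γ δ : Type} [Fintype α] [Fintype β] [Fintype γ] [Fintype δ]

lemma condEnt_term_nonpos (hp0 : ∀ ω, 0 ≤ p ω) (X : Ω → α) (Y : Ω → β) (x : α) (y : β) :
    pr p (fun ω => (X ω, Y ω)) (x, y) *
      Real.log (pr p (fun ω => (X ω, Y ω)) (x, y) / pr p Y y) ≤ 0 := by
  set t := pr p (fun ω => (X ω, Y ω)) (x, y) with ht
  have h0 : 0 ≤ t := pr_nonneg hp0 _ _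
  have hle : t ≤ pr p Y y := pr_mono_s13 hp0 _ _ _ _ (fun ω h => by
    simpa using congrArg Prod.snd h)
  rcases eq_or_lt_of_le h0 with h | h
  · simp [← h]
  · have h1 : t / pr p Y y ≤ 1 := by
      rw [div_le_one (lt_of_lt_of_le h hle)]; exact hle
    have h2 := Real.log_nonpos (div_nonneg h0 (pr_nonneg hp0 _ _)) h1
    exact mul_nonpos_of_nonneg_of_nonpos (le_of_lt h) h2

lemma condEnt_nonneg (hp0 : ∀ ω, 0 ≤ p ω) (X : Ω → α) (Y : Ω → β) :
    0 ≤ condEnt p X Y := by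
  unfold condEnt
  rw [neg_nonneg]
  apply Finset.sum_nonpos; intro x _
  apply Finset.sum_nonpos; intro y _
  exact condEnt_term_nonpos hp0 X Y x y

/-- Reindexing the conditioning variable by an injective map. -/
lemma condEnt_comp_inj (X : Ω → α) (Y : Ω → β) (e : β → γ)
    (he : Function.Injective e) :
    condEnt p X (fun ω => e (Y ω)) = condEnt p X Y := by
  unfold condEnt
  congr 1
  refine Finset.sum_congr rfl fun x _ => ?_
  calc ∑ c : γ, pr p (fun ω => (X ω, e (Y ω))) (x, c) *
        Real.log (pr p (fun ω => (X ω, e (Y ω))) (x, c) / pr p (fun ω => e (Y ω)) c)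
      = ∑ c ∈ Finset.univ.image e, pr p (fun ω => (X ω, e (Y ω))) (x, c) *
        Real.log (pr p (fun ω => (X ω, e (Y ω))) (x, c) / pr p (fun ω => e (Y ω)) c) := by
        refine (Finset.sum_subset (Finset.subset_univ _) ?_).symm
        intro c _ hc
        have hz : pr p (fun ω => (X ω, e (Y ω))) (x, c) = 0 := by
          unfold pr
          apply Finset.sum_eq_zero; intro ω _
          rw [if_neg]
          intro h
          exact hc (Finset.mem_image.mpr ⟨Y ω, Finset.mem_univ _, (Prod.ext_iff.mp h).2⟩)
        rw [hz]; ring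
    _ = ∑ y : β, pr p (fun ω => (X ω, e (Y ω))) (x, e y) *
        Real.log (pr p (fun ω => (X ω, e (Y ω))) (x, e y) / pr p (fun ω => e (Y ω)) (e y)) :=
        Finset.sum_image (fun a _ b _ h => he h)
    _ = ∑ y : β, pr p (fun ω => (X ω, Y ω)) (x, y) *
        Real.log (pr p (fun ω => (X ω, Y ω)) (x, y) / pr p Y y) := by
        refine Finset.sum_congr rfl fun y _ => ?_
        have h1 : pr p (fun ω => (X ω, e (Y ω))) (x, e y) = pr p (fun ω => (X ω, Y ω)) (x, y) :=
          pr_eq_of_iff _ _ _ _ (fun ω => by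
            constructor
            · intro h; exact Prod.ext (Prod.ext_iff.mp h).1 (he (Prod.ext_iff.mp h).2)
            · intro h; exact Prod.ext (Prod.ext_iff.mp h).1 (congrArg e (Prod.ext_iff.mp h).2))
        have h2 : pr p (fun ω => e (Y ω)) (e y) = pr p Y y :=
          pr_eq_of_iff _ _ _ _ (fun ω => ⟨fun h => he h, fun h => congrArg e h⟩)
        rw [h1, h2]

/-- Reindexing the main variable by an injective map. -/
lemma condEnt_comp_inj_left (X : Ω → α) (Y : Ω → β) (e : α → γ)
    (he : Function.Injective e) :
    condEnt p (fun ω => e (X ω)) Y = condEnt p X Y := by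
  unfold condEnt
  congr 1
  rw [Finset.sum_comm]
  rw [show (∑ x : α, ∑ y : β, pr p (fun ω => (X ω, Y ω)) (x, y) *
      Real.log (pr p (fun ω => (X ω, Y ω)) (x, y) / pr p Y y)) =
      ∑ y : β, ∑ x : α, pr p (fun ω => (X ω, Y ω)) (x, y) *
      Real.log (pr p (fun ω => (X ω, Y ω)) (x, y) / pr p Y y) from Finset.sum_comm]
  refine Finset.sum_congr rfl fun y _ => ?_
  calc ∑ c : γ, pr p (fun ω => (e (X ω), Y ω)) (c, y) *
        Real.log (pr p (fun ω => (e (X ω), Y ω)) (c, y) / pr p Y y)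
      = ∑ c ∈ Finset.univ.image e, pr p (fun ω => (e (X ω), Y ω)) (c, y) *
        Real.log (pr p (fun ω => (e (X ω), Y ω)) (c, y) / pr p Y y) := by
        refine (Finset.sum_subset (Finset.subset_univ _) ?_).symm
        intro c _ hc
        have hz : pr p (fun ω => (e (X ω), Y ω)) (c, y) = 0 := by
          unfold pr
          apply Finset.sum_eq_zero; intro ω _
          rw [if_neg]
          intro h
          exact hc (Finset.mem_image.mpr ⟨X ω, Finset.mem_univ _, (Prod.ext_iff.mp h).1⟩)
        rw [hz]; ring
    _ = ∑ a : α, pr p (fun ω => (e (X ω), Y ω)) (e a, y) *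
        Real.log (pr p (fun ω => (e (X ω), Y ω)) (e a, y) / pr p Y y) :=
        Finset.sum_image (fun a _ b _ h => he h)
    _ = ∑ a : α, pr p (fun ω => (X ω, Y ω)) (a, y) *
        Real.log (pr p (fun ω => (X ω, Y ω)) (a, y) / pr p Y y) := by
        refine Finset.sum_congr rfl fun a _ => ?_
        have h1 : pr p (fun ω => (e (X ω), Y ω)) (e a, y) = pr p (fun ω => (X ω, Y ω)) (a, y) :=
          pr_eq_of_iff _ _ _ _ (fun ω => by
            constructor
            · intro h; exact Prod.ext (he (Prod.ext_iff.mp h).1) (Prod.ext_iff.mp h).2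
            · intro h; exact Prod.ext (congrArg e (Prod.ext_iff.mp h).1) (Prod.ext_iff.mp h).2)
        rw [h1]

/-- `H(X | Z) = 0` when `X` is a function of `Z`. -/
lemma condEnt_eq_zero_of_det (X : Ω → α) (Z : Ω → γ) (h : γ → α)
    (hdet : ∀ ω, X ω = h (Z ω)) : condEnt p X Z = 0 := by
  unfold condEnt
  rw [neg_eq_zero]
  apply Finset.sum_eq_zero; intro x _
  apply Finset.sum_eq_zero; intro z _
  by_cases hx : x = h z
  · have h1 : pr p (fun ω => (X ω, Z ω)) (x, z) = pr p Z z :=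
      pr_eq_of_iff _ _ _ _ (fun ω => by
        constructor
        · intro hh; exact (Prod.ext_iff.mp hh).2
        · intro hh; exact Prod.ext (by rw [hdet ω, hh, hx]) hh)
    rw [h1]
    rcases eq_or_ne (pr p Z z) 0 with h0 | h0
    · simp [h0]
    · rw [div_self h0, Real.log_one, mul_zero]
  · have h1 : pr p (fun ω => (X ω, Z ω)) (x, z) = 0 := by
      unfold pr
      apply Finset.sum_eq_zero; intro ω _
      rw [if_neg]
      intro hh
      simp only [Prod.mk.injEq] at hh
      exact hx (by rw [← hh.1, hdet ω, hh.2])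
    rw [h1]; ring

end ent

section chain
variable {Ω : Type} [Fintype Ω] {p : Ω → ℝ}
variable {α β γ : Type} [Fintype α] [Fintype β] [Fintype γ]

lemma sum_pr_mid (X : Ω → α) (Y : Ω → β) (Z : Ω → γ) (x : α) (z : γ) :
    ∑ y : β, pr p (fun ω => (X ω, Y ω, Z ω)) (x, y, z)
      = pr p (fun ω => (X ω, Z ω)) (x, z) := by
  have h : ∀ y, pr p (fun ω => (X ω, Y ω, Z ω)) (x, y, z)
      = pr p (fun ω => (Y ω, X ω, Z ω)) (y, x, z) := fun y =>
    pr_eq_of_iff _ _ _ _ (fun ω => by simp only [Prod.ext_iff]; tauto)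
  simp_rw [h]
  exact sum_pr_fst Y (fun ω => (X ω, Z ω)) (x, z)

lemma condEnt_chain (hp0 : ∀ ω, 0 ≤ p ω) (X : Ω → α) (Y : Ω → β) (Z : Ω → γ) :
    condEnt p (fun ω => (X ω, Y ω)) Z =
      condEnt p X Z + condEnt p Y (fun ω => (X ω, Z ω)) := by
  have hP3 : ∀ x y z, pr p (fun ω => ((X ω, Y ω), Z ω)) ((x, y), z)
      = pr p (fun ω => (X ω, Y ω, Z ω)) (x, y, z) := fun x y z =>
    pr_eq_of_iff _ _ _ _ (fun ω => by simp only [Prod.ext_iff]; tauto)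
  have hP3' : ∀ x y z, pr p (fun ω => (Y ω, X ω, Z ω)) (y, x, z)
      = pr p (fun ω => (X ω, Y ω, Z ω)) (x, y, z) := fun x y z =>
    pr_eq_of_iff _ _ _ _ (fun ω => by simp only [Prod.ext_iff]; tauto)
  have e1 : condEnt p (fun ω => (X ω, Y ω)) Z
      = -∑ x : α, ∑ y : β, ∑ z : γ, pr p (fun ω => (X ω, Y ω, Z ω)) (x, y, z) *
          Real.log (pr p (fun ω => (X ω, Y ω, Z ω)) (x, y, z) / pr p Z z) := by
    unfold condEnt
    rw [Fintype.sum_prod_type]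
    simp_rw [hP3]
  have e2 : condEnt p X Z
      = -∑ x : α, ∑ y : β, ∑ z : γ, pr p (fun ω => (X ω, Y ω, Z ω)) (x, y, z) *
          Real.log (pr p (fun ω => (X ω, Z ω)) (x, z) / pr p Z z) := by
    unfold condEnt
    congr 1
    refine Finset.sum_congr rfl fun x _ => ?_
    rw [Finset.sum_comm]
    refine Finset.sum_congr rfl fun z _ => ?_
    calc pr p (fun ω => (X ω, Z ω)) (x, z) *
          Real.log (pr p (fun ω => (X ω, Z ω)) (x, z) / pr p Z z)
        = (∑ y : β, pr p (fun ω => (X ω, Y ω, Z ω)) (x, y, z)) *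
          Real.log (pr p (fun ω => (X ω, Z ω)) (x, z) / pr p Z z) := by
          rw [sum_pr_mid]
      _ = _ := Finset.sum_mul _ _ _
  have e3 : condEnt p Y (fun ω => (X ω, Z ω))
      = -∑ x : α, ∑ y : β, ∑ z : γ, pr p (fun ω => (X ω, Y ω, Z ω)) (x, y, z) *
          Real.log (pr p (fun ω => (X ω, Y ω, Z ω)) (x, y, z) /
            pr p (fun ω => (X ω, Z ω)) (x, z)) := by
    unfold condEnt
    congr 1
    calc ∑ y : β, ∑ w : α × γ, pr p (fun ω => (Y ω, X ω, Z ω)) (y, w) *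
          Real.log (pr p (fun ω => (Y ω, X ω, Z ω)) (y, w) /
            pr p (fun ω => (X ω, Z ω)) w)
        = ∑ y : β, ∑ x : α, ∑ z : γ, pr p (fun ω => (X ω, Y ω, Z ω)) (x, y, z) *
          Real.log (pr p (fun ω => (X ω, Y ω, Z ω)) (x, y, z) /
            pr p (fun ω => (X ω, Z ω)) (x, z)) := by
          refine Finset.sum_congr rfl fun y _ => ?_
          rw [Fintype.sum_prod_type]
          simp_rw [hP3']
      _ = _ := Finset.sum_comm
  rw [e1, e2, e3, ← neg_add, neg_inj]
  rw [← Finset.sum_add_distrib]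
  refine Finset.sum_congr rfl fun x _ => ?_
  rw [← Finset.sum_add_distrib]
  refine Finset.sum_congr rfl fun y _ => ?_
  rw [← Finset.sum_add_distrib]
  refine Finset.sum_congr rfl fun z _ => ?_
  set t := pr p (fun ω => (X ω, Y ω, Z ω)) (x, y, z) with htdef
  set s := pr p (fun ω => (X ω, Z ω)) (x, z) with hsdef
  set u := pr p Z z with hudef
  have ht0 : 0 ≤ t := pr_nonneg hp0 _ _
  rcases eq_or_lt_of_le ht0 with h | h
  · simp [← h]
  · have hts : t ≤ s := pr_mono_s13 hp0 _ _ _ _ (fun ω hh => by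
      simp only [Prod.ext_iff] at hh ⊢; tauto)
    have hsu : s ≤ u := pr_mono_s13 hp0 _ _ _ _ (fun ω hh => by
      simp only [Prod.ext_iff] at hh ⊢; tauto)
    have hs : 0 < s := lt_of_lt_of_le h hts
    have hu : 0 < u := lt_of_lt_of_le hs hsu
    rw [Real.log_div h.ne' hu.ne', Real.log_div hs.ne' hu.ne', Real.log_div h.ne' hs.ne']
    ring

end chain

section gibbs
variable {Ω : Type} [Fintype Ω] {p : Ω → ℝ}
variable {α β γ : Type} [Fintype α] [Fintype β] [Fintype γ]

lemma condEnt_expand (X : Ω → α) (Y : Ω → β) (Z : Ω → γ) :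
    condEnt p X Z
      = -∑ x : α, ∑ y : β, ∑ z : γ, pr p (fun ω => (X ω, Y ω, Z ω)) (x, y, z) *
          Real.log (pr p (fun ω => (X ω, Z ω)) (x, z) / pr p Z z) := by
  unfold condEnt
  congr 1
  refine Finset.sum_congr rfl fun x _ => ?_
  rw [Finset.sum_comm]
  refine Finset.sum_congr rfl fun z _ => ?_
  calc pr p (fun ω => (X ω, Z ω)) (x, z) *
        Real.log (pr p (fun ω => (X ω, Z ω)) (x, z) / pr p Z z)
      = (∑ y : β, pr p (fun ω => (X ω, Y ω, Z ω)) (x, y, z)) *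
        Real.log (pr p (fun ω => (X ω, Z ω)) (x, z) / pr p Z z) := by
        rw [sum_pr_mid]
    _ = _ := Finset.sum_mul _ _ _

lemma condEnt_pair_expand (X : Ω → α) (Y : Ω → β) (Z : Ω → γ) :
    condEnt p X (fun ω => (Y ω, Z ω))
      = -∑ x : α, ∑ y : β, ∑ z : γ, pr p (fun ω => (X ω, Y ω, Z ω)) (x, y, z) *
          Real.log (pr p (fun ω => (X ω, Y ω, Z ω)) (x, y, z) /
            pr p (fun ω => (Y ω, Z ω)) (y, z)) := by
  unfold condEnt
  congr 1
  refine Finset.sum_congr rfl fun x _ => ?_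
  rw [Fintype.sum_prod_type]

lemma mutInfo_nonneg (hp0 : ∀ ω, 0 ≤ p ω) (hp1 : ∑ ω : Ω, p ω = 1)
    (X : Ω → α) (Y : Ω → β) (Z : Ω → γ) : 0 ≤ mutInfo p X Y Z := by
  unfold mutInfo
  rw [condEnt_expand X Y Z, condEnt_pair_expand X Y Z]
  have key : ∀ x y z,
      pr p (fun ω => (X ω, Y ω, Z ω)) (x, y, z) -
        pr p (fun ω => (X ω, Z ω)) (x, z) * pr p (fun ω => (Y ω, Z ω)) (y, z) / pr p Z z
      ≤ pr p (fun ω => (X ω, Y ω, Z ω)) (x, y, z) *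
          Real.log (pr p (fun ω => (X ω, Y ω, Z ω)) (x, y, z) /
            pr p (fun ω => (Y ω, Z ω)) (y, z)) -
        pr p (fun ω => (X ω, Y ω, Z ω)) (x, y, z) *
          Real.log (pr p (fun ω => (X ω, Z ω)) (x, z) / pr p Z z) := by
    intro x y z
    set a := pr p (fun ω => (X ω, Y ω, Z ω)) (x, y, z) with hadef
    set b := pr p (fun ω => (Y ω, Z ω)) (y, z) with hbdef
    set c := pr p (fun ω => (X ω, Z ω)) (x, z) with hcdef
    set d := pr p Z z with hddef
    have ha0 : 0 ≤ a := pr_nonneg hp0 _ _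
    have hb0 : 0 ≤ b := pr_nonneg hp0 _ _
    have hc0 : 0 ≤ c := pr_nonneg hp0 _ _
    have hd0 : 0 ≤ d := pr_nonneg hp0 _ _
    rcases eq_or_lt_of_le ha0 with h | ha
    · have : 0 ≤ c * b / d := by positivity
      simp only [← h]
      simp
      linarith
    · have hab : a ≤ b := pr_mono_s13 hp0 _ _ _ _ (fun ω hh => by
        simp only [Prod.ext_iff] at hh ⊢; tauto)
      have hac : a ≤ c := pr_mono_s13 hp0 _ _ _ _ (fun ω hh => by
        simp only [Prod.ext_iff] at hh ⊢; tauto)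
      have hcd : c ≤ d := pr_mono_s13 hp0 _ _ _ _ (fun ω hh => by
        simp only [Prod.ext_iff] at hh ⊢; tauto)
      have hb : 0 < b := lt_of_lt_of_le ha hab
      have hc : 0 < c := lt_of_lt_of_le ha hac
      have hd : 0 < d := lt_of_lt_of_le hc hcd
      have hlog := Real.log_le_sub_one_of_pos (show 0 < (b*c)/(a*d) by positivity)
      have h1 : a * Real.log ((b*c)/(a*d)) ≤ a * ((b*c)/(a*d) - 1) :=
        mul_le_mul_of_nonneg_left hlog ha.le
      have h2 : a * ((b*c)/(a*d) - 1) = b*c/d - a := by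
        field_simp
      rw [h2] at h1
      have h3 : a * Real.log (a/b) - a * Real.log (c/d)
          = -(a * Real.log ((b*c)/(a*d))) := by
        rw [Real.log_div (mul_pos hb hc).ne' (mul_pos ha hd).ne',
          Real.log_mul hb.ne' hc.ne', Real.log_mul ha.ne' hd.ne',
          Real.log_div ha.ne' hb.ne', Real.log_div hc.ne' hd.ne']
        ring
      rw [h3]
      have h4 : c * b / d = b * c / d := by ring
      rw [h4]
      linarith
  have hsum1 : ∑ x : α, ∑ y : β, ∑ z : γ,
      pr p (fun ω => (X ω, Y ω, Z ω)) (x, y, z) = 1 := by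
    have hinner : ∀ x y, ∑ z : γ, pr p (fun ω => (X ω, Y ω, Z ω)) (x, y, z)
        = pr p (fun ω => (X ω, Y ω)) (x, y) := by
      intro x y
      have h : ∀ z, pr p (fun ω => (X ω, Y ω, Z ω)) (x, y, z)
          = pr p (fun ω => ((X ω, Y ω), Z ω)) ((x, y), z) := fun z =>
        pr_eq_of_iff _ _ _ _ (fun ω => by simp only [Prod.ext_iff]; tauto)
      simp_rw [h]
      exact sum_pr_snd (fun ω => (X ω, Y ω)) Z (x, y)
    have this2 : ∀ x, ∑ y : β, ∑ z : γ, pr p (fun ω => (X ω, Y ω, Z ω)) (x, y, z)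
        = pr p X x := by
      intro x
      simp_rw [hinner]
      exact sum_pr_snd X Y x
    simp_rw [this2]
    exact sum_pr_total hp1 X
  have hsum2 : ∑ x : α, ∑ y : β, ∑ z : γ,
      (pr p (fun ω => (X ω, Z ω)) (x, z) * pr p (fun ω => (Y ω, Z ω)) (y, z) / pr p Z z)
      = 1 := by
    have step : ∀ x, ∑ y : β, ∑ z : γ,
        (pr p (fun ω => (X ω, Z ω)) (x, z) * pr p (fun ω => (Y ω, Z ω)) (y, z) / pr p Z z)
        = ∑ z : γ, pr p (fun ω => (X ω, Z ω)) (x, z) * pr p Z z / pr p Z z := by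
      intro x
      rw [Finset.sum_comm]
      refine Finset.sum_congr rfl fun z _ => ?_
      rw [← sum_pr_fst Y Z z, Finset.mul_sum, Finset.sum_div]
    simp_rw [step]
    rw [Finset.sum_comm]
    have step2 : ∀ z, ∑ x : α, pr p (fun ω => (X ω, Z ω)) (x, z) * pr p Z z / pr p Z z
        = pr p Z z := by
      intro z
      rcases eq_or_ne (pr p Z z) 0 with h0 | h0
      · simp [h0]
      · simp_rw [mul_div_assoc, div_self h0, mul_one]
        exact sum_pr_fst X Z z
    simp_rw [step2]
    exact sum_pr_total hp1 Z
  have hbound : (0:ℝ) ≤ -∑ x : α, ∑ y : β, ∑ z : γ,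
        pr p (fun ω => (X ω, Y ω, Z ω)) (x, y, z) *
          Real.log (pr p (fun ω => (X ω, Z ω)) (x, z) / pr p Z z)
      - -∑ x : α, ∑ y : β, ∑ z : γ,
        pr p (fun ω => (X ω, Y ω, Z ω)) (x, y, z) *
          Real.log (pr p (fun ω => (X ω, Y ω, Z ω)) (x, y, z) /
            pr p (fun ω => (Y ω, Z ω)) (y, z)) := by
    have hle : ∑ x : α, ∑ y : β, ∑ z : γ,
        (pr p (fun ω => (X ω, Y ω, Z ω)) (x, y, z) -
          pr p (fun ω => (X ω, Z ω)) (x, z) * pr p (fun ω => (Y ω, Z ω)) (y, z) / pr p Z z)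
        ≤ ∑ x : α, ∑ y : β, ∑ z : γ,
        (pr p (fun ω => (X ω, Y ω, Z ω)) (x, y, z) *
          Real.log (pr p (fun ω => (X ω, Y ω, Z ω)) (x, y, z) /
            pr p (fun ω => (Y ω, Z ω)) (y, z)) -
        pr p (fun ω => (X ω, Y ω, Z ω)) (x, y, z) *
          Real.log (pr p (fun ω => (X ω, Z ω)) (x, z) / pr p Z z)) := by
      refine Finset.sum_le_sum fun x _ => ?_
      refine Finset.sum_le_sum fun y _ => ?_
      refine Finset.sum_le_sum fun z _ => ?_
      exact key x y z
    simp_rw [Finset.sum_sub_distrib] at hle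
    rw [hsum1, hsum2] at hle
    linarith
  linarith

end gibbs

section derived
variable {Ω : Type} [Fintype Ω] {p : Ω → ℝ}
variable {α β γ δ : Type} [Fintype α] [Fintype β] [Fintype γ] [Fintype δ]

lemma mutInfo_symm (hp0 : ∀ ω, 0 ≤ p ω) (X : Ω → α) (Y : Ω → β) (Z : Ω → γ) :
    mutInfo p X Y Z = mutInfo p Y X Z := by
  have h1 := condEnt_chain hp0 X Y Z
  have h2 := condEnt_chain hp0 Y X Z
  have h3 : condEnt p (fun ω => (X ω, Y ω)) Z = condEnt p (fun ω => (Y ω, X ω)) Z :=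
    condEnt_comp_inj_left (fun ω => (Y ω, X ω)) Z Prod.swap Prod.swap_injective
  unfold mutInfo
  linarith

lemma mutInfo_chain (X : Ω → α) (U : Ω → β) (V : Ω → δ) (W : Ω → γ) :
    mutInfo p X (fun ω => (U ω, V ω)) W
      = mutInfo p X U W + mutInfo p X V (fun ω => (U ω, W ω)) := by
  have hinj : Function.Injective (fun q : (β × δ) × γ => (q.1.2, (q.1.1, q.2))) := by
    intro q r h
    simp only [Prod.ext_iff] at *
    tauto
  have h0 := condEnt_comp_inj (p := p) X (fun ω => ((U ω, V ω), W ω))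
    (fun q : (β × δ) × γ => (q.1.2, (q.1.1, q.2))) hinj
  have h : condEnt p X (fun ω => (V ω, (U ω, W ω)))
      = condEnt p X (fun ω => ((U ω, V ω), W ω)) := h0
  unfold mutInfo
  rw [← h]
  ring

lemma mutInfo_cond_inj (X : Ω → α) (Y : Ω → β) (Z : Ω → γ) (e : γ → δ)
    (he : Function.Injective e) :
    mutInfo p X Y (fun ω => e (Z ω)) = mutInfo p X Y Z := by
  unfold mutInfo
  have h1 : condEnt p X (fun ω => e (Z ω)) = condEnt p X Z :=
    condEnt_comp_inj X Z e he
  have h2 : condEnt p X (fun ω => (Y ω, e (Z ω))) = condEnt p X (fun ω => (Y ω, Z ω)) :=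
    condEnt_comp_inj X (fun ω => (Y ω, Z ω)) (fun q => (q.1, e q.2))
      (fun q r h => by
        simp only [Prod.ext_iff] at *
        exact ⟨h.1, he h.2⟩)
  rw [h1, h2]

lemma mutInfo_mid_inj (X : Ω → α) (Y : Ω → β) (Z : Ω → γ) (e : β → δ)
    (he : Function.Injective e) :
    mutInfo p X (fun ω => e (Y ω)) Z = mutInfo p X Y Z := by
  unfold mutInfo
  have h2 : condEnt p X (fun ω => (e (Y ω), Z ω)) = condEnt p X (fun ω => (Y ω, Z ω)) :=
    condEnt_comp_inj X (fun ω => (Y ω, Z ω)) (fun q => (e q.1, q.2))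
      (fun q r h => by
        simp only [Prod.ext_iff] at *
        exact ⟨he h.1, h.2⟩)
  rw [h2]

/-- `I(X ; Y | Z) = 0` when `Y` is a function of `Z`. -/
lemma mutInfo_det (hp0 : ∀ ω, 0 ≤ p ω) (X : Ω → α) (Y : Ω → β) (Z : Ω → γ)
    (h : γ → β) (hdet : ∀ ω, Y ω = h (Z ω)) : mutInfo p X Y Z = 0 := by
  rw [mutInfo_symm hp0]
  unfold mutInfo
  rw [condEnt_eq_zero_of_det Y Z h hdet,
    condEnt_eq_zero_of_det Y (fun ω => (X ω, Z ω)) (fun q => h q.2) (fun ω => hdet ω)]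
  ring

lemma condEnt_cond_reduce (hp0 : ∀ ω, 0 ≤ p ω) (hp1 : ∑ ω : Ω, p ω = 1)
    (X : Ω → α) (Y : Ω → β) (Z : Ω → γ) :
    condEnt p X (fun ω => (Y ω, Z ω)) ≤ condEnt p X Z := by
  have h := mutInfo_nonneg hp0 hp1 X Y Z
  unfold mutInfo at h
  linarith

/-- Conditioning on more information (a refinement) gives smaller entropy. -/
lemma condEnt_mono_det (hp0 : ∀ ω, 0 ≤ p ω) (hp1 : ∑ ω : Ω, p ω = 1)
    (X : Ω → α) (Z : Ω → γ) (h : γ → δ) :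
    condEnt p X Z ≤ condEnt p X (fun ω => h (Z ω)) := by
  have h1 : condEnt p X (fun ω => (Z ω, h (Z ω))) = condEnt p X Z :=
    condEnt_comp_inj X Z (fun z => (z, h z)) (fun a b hh => (Prod.ext_iff.mp hh).1)
  have h2 : condEnt p X (fun ω => (Z ω, h (Z ω))) ≤ condEnt p X (fun ω => h (Z ω)) :=
    condEnt_cond_reduce hp0 hp1 X Z (fun ω => h (Z ω))
  linarith

/-- Data processing: if `U` is a function of `(V, W)` then `I(X;U|W) ≤ I(X;V|W)`. -/
lemma mutInfo_data_proc (hp0 : ∀ ω, 0 ≤ p ω) (hp1 : ∑ ω : Ω, p ω = 1)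
    (X : Ω → α) (U : Ω → β) (V : Ω → δ) (W : Ω → γ)
    (h : δ × γ → β) (hdet : ∀ ω, U ω = h (V ω, W ω)) :
    mutInfo p X U W ≤ mutInfo p X V W := by
  have hc1 := mutInfo_chain (p := p) X U V W
  have hc2 := mutInfo_chain (p := p) X V U W
  have hswap : mutInfo p X (fun ω => (U ω, V ω)) W
      = mutInfo p X (fun ω => (V ω, U ω)) W :=
    mutInfo_mid_inj X (fun ω => (V ω, U ω)) W Prod.swap Prod.swap_injective
  have hz : mutInfo p X U (fun ω => (V ω, W ω)) = 0 :=
    mutInfo_det hp0 X U (fun ω => (V ω, W ω)) h hdet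
  have hnn := mutInfo_nonneg hp0 hp1 X V (fun ω => (U ω, W ω))
  linarith

end derived
/-- Abstraction of Lemma 1: if `H(A | Q, X) = 0` where `Q = f ∘ Q'` is part of the full
query tuple `Q'`, and `I(Q'; X | Y, M, Z) = 0`, then for any part `Q'' = g ∘ Q'` of `Q'`
and any function `X' = φ ∘ X` of the database,
`I(A; Q'' | Q, Y, X', Z, M) = 0`. -/
theorem stmt13 {Ω α χ χ' υ τ τ' τ'' μ ζ : Type}
    [Fintype Ω] [Fintype α] [Fintype χ] [Fintype χ'] [Fintype υ]
    [Fintype τ] [Fintype τ'] [Fintype τ''] [Fintype μ] [Fintype ζ]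
    (p : Ω → ℝ) (hp0 : ∀ ω, 0 ≤ p ω) (hp1 : ∑ ω : Ω, p ω = 1)
    (A : Ω → α) (Q' : Ω → τ') (X : Ω → χ) (Y : Ω → υ) (M : Ω → μ) (Z : Ω → ζ)
    (f : τ' → τ) (g : τ' → τ'') (φ : χ → χ')
    (hAdet : condEnt p A (fun ω => (f (Q' ω), X ω)) = 0)
    (hQX : mutInfo p Q' X (fun ω => (Y ω, M ω, Z ω)) = 0) :
    mutInfo p A (fun ω => g (Q' ω))
        (fun ω => (f (Q' ω), Y ω, φ (X ω), Z ω, M ω)) = 0 := by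
  -- abbreviations (as plain lambdas)
  -- W := fun ω => (Y ω, M ω, Z ω)
  -- Step 1: I(X; Q' | W) = 0
  have step1 : mutInfo p X Q' (fun ω => (Y ω, M ω, Z ω)) = 0 :=
    (mutInfo_symm hp0 X Q' _).trans hQX
  -- Step 2: I(X; Q' | φX, W) = 0
  have hc1 := mutInfo_chain (p := p) X Q' (fun ω => φ (X ω)) (fun ω => (Y ω, M ω, Z ω))
  have hc2 := mutInfo_chain (p := p) X (fun ω => φ (X ω)) Q' (fun ω => (Y ω, M ω, Z ω))
  have hswap : mutInfo p X (fun ω => (Q' ω, φ (X ω))) (fun ω => (Y ω, M ω, Z ω))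
      = mutInfo p X (fun ω => (φ (X ω), Q' ω)) (fun ω => (Y ω, M ω, Z ω)) :=
    mutInfo_mid_inj X (fun ω => (φ (X ω), Q' ω)) (fun ω => (Y ω, M ω, Z ω))
      Prod.swap Prod.swap_injective
  have h5 : mutInfo p X (fun ω => φ (X ω)) (fun ω => (Q' ω, (Y ω, M ω, Z ω)))
      = condEnt p (fun ω => φ (X ω)) (fun ω => (Q' ω, (Y ω, M ω, Z ω))) := by
    rw [mutInfo_symm hp0]
    unfold mutInfo
    rw [condEnt_eq_zero_of_det (fun ω => φ (X ω))
      (fun ω => (X ω, (Q' ω, (Y ω, M ω, Z ω)))) (fun q => φ q.1) (fun ω => rfl)]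
    ring
  have h6 : mutInfo p X (fun ω => φ (X ω)) (fun ω => (Y ω, M ω, Z ω))
      = condEnt p (fun ω => φ (X ω)) (fun ω => (Y ω, M ω, Z ω)) := by
    rw [mutInfo_symm hp0]
    unfold mutInfo
    rw [condEnt_eq_zero_of_det (fun ω => φ (X ω))
      (fun ω => (X ω, (Y ω, M ω, Z ω))) (fun q => φ q.1) (fun ω => rfl)]
    ring
  have h7 : condEnt p (fun ω => φ (X ω)) (fun ω => (Q' ω, (Y ω, M ω, Z ω)))
      ≤ condEnt p (fun ω => φ (X ω)) (fun ω => (Y ω, M ω, Z ω)) :=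
    condEnt_cond_reduce hp0 hp1 _ Q' _
  have h8 := mutInfo_nonneg hp0 hp1 X Q' (fun ω => (φ (X ω), (Y ω, M ω, Z ω)))
  have hB : mutInfo p X Q' (fun ω => (φ (X ω), (Y ω, M ω, Z ω))) = 0 :=
    le_antisymm (by linarith) h8
  -- Step 3: data processing to (Q, Q'')
  have h9 : mutInfo p X (fun ω => (f (Q' ω), g (Q' ω)))
        (fun ω => (φ (X ω), (Y ω, M ω, Z ω)))
      ≤ mutInfo p X Q' (fun ω => (φ (X ω), (Y ω, M ω, Z ω))) :=
    mutInfo_data_proc hp0 hp1 X _ Q' _ (fun q => (f q.1, g q.1)) (fun ω => rfl)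
  have h10 := mutInfo_nonneg hp0 hp1 X (fun ω => (f (Q' ω), g (Q' ω)))
    (fun ω => (φ (X ω), (Y ω, M ω, Z ω)))
  have hU : mutInfo p X (fun ω => (f (Q' ω), g (Q' ω)))
      (fun ω => (φ (X ω), (Y ω, M ω, Z ω))) = 0 := le_antisymm (by linarith) h10
  -- Step 4: chain to isolate Q''
  have hc3 := mutInfo_chain (p := p) X (fun ω => f (Q' ω)) (fun ω => g (Q' ω))
    (fun ω => (φ (X ω), (Y ω, M ω, Z ω)))
  have h11 := mutInfo_nonneg hp0 hp1 X (fun ω => f (Q' ω))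
    (fun ω => (φ (X ω), (Y ω, M ω, Z ω)))
  have h12 := mutInfo_nonneg hp0 hp1 X (fun ω => g (Q' ω))
    (fun ω => (f (Q' ω), (φ (X ω), (Y ω, M ω, Z ω))))
  have hQB : mutInfo p X (fun ω => g (Q' ω))
      (fun ω => (f (Q' ω), (φ (X ω), (Y ω, M ω, Z ω)))) = 0 :=
    le_antisymm (by linarith) h12
  -- Step 5: repackage the conditioning into C
  have heinj : Function.Injective
      (fun q : τ × (χ' × (υ × μ × ζ)) =>
        (q.1, q.2.2.1, q.2.1, q.2.2.2.2, q.2.2.2.1)) := by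
    intro a b h
    simp only [Prod.ext_iff] at *
    tauto
  have h13 := mutInfo_cond_inj (p := p) X (fun ω => g (Q' ω))
    (fun ω => (f (Q' ω), (φ (X ω), (Y ω, M ω, Z ω))))
    (fun q : τ × (χ' × (υ × μ × ζ)) =>
      (q.1, q.2.2.1, q.2.1, q.2.2.2.2, q.2.2.2.1)) heinj
  have hXC : mutInfo p X (fun ω => g (Q' ω))
      (fun ω => (f (Q' ω), Y ω, φ (X ω), Z ω, M ω)) = 0 := by
    have h14 : mutInfo p X (fun ω => g (Q' ω))
        (fun ω => (f (Q' ω), Y ω, φ (X ω), Z ω, M ω))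
      = mutInfo p X (fun ω => g (Q' ω))
        (fun ω => (f (Q' ω), (φ (X ω), (Y ω, M ω, Z ω)))) := h13
    rw [h14, hQB]
  -- Step 6: the answer side
  have hA1 : condEnt p A
      (fun ω => (X ω, (f (Q' ω), Y ω, φ (X ω), Z ω, M ω))) = 0 := by
    refine le_antisymm ?_ (condEnt_nonneg hp0 _ _)
    have hmono : condEnt p A
        (fun ω => (X ω, (f (Q' ω), Y ω, φ (X ω), Z ω, M ω)))
        ≤ condEnt p A (fun ω => (f (Q' ω), X ω)) :=
      condEnt_mono_det hp0 hp1 A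
        (fun ω => (X ω, (f (Q' ω), Y ω, φ (X ω), Z ω, M ω)))
        (fun q : χ × (τ × υ × χ' × ζ × μ) => (q.2.1, q.1))
    rw [hAdet] at hmono
    exact hmono
  have hA2 : mutInfo p A (fun ω => g (Q' ω))
      (fun ω => (X ω, (f (Q' ω), Y ω, φ (X ω), Z ω, M ω))) = 0 := by
    refine le_antisymm ?_ (mutInfo_nonneg hp0 hp1 _ _ _)
    unfold mutInfo
    rw [hA1]
    have := condEnt_nonneg hp0 A
      (fun ω => (g (Q' ω), (X ω, (f (Q' ω), Y ω, φ (X ω), Z ω, M ω))))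
    linarith
  -- Step 7: combine
  have hc4 := mutInfo_chain (p := p) (fun ω => g (Q' ω)) X A
    (fun ω => (f (Q' ω), Y ω, φ (X ω), Z ω, M ω))
  have hs1 : mutInfo p (fun ω => g (Q' ω)) X
      (fun ω => (f (Q' ω), Y ω, φ (X ω), Z ω, M ω)) = 0 :=
    (mutInfo_symm hp0 _ _ _).trans hXC
  have hs2 : mutInfo p (fun ω => g (Q' ω)) A
      (fun ω => (X ω, (f (Q' ω), Y ω, φ (X ω), Z ω, M ω))) = 0 :=
    (mutInfo_symm hp0 _ _ _).trans hA2
  have hdp : mutInfo p (fun ω => g (Q' ω)) A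
        (fun ω => (f (Q' ω), Y ω, φ (X ω), Z ω, M ω))
      ≤ mutInfo p (fun ω => g (Q' ω)) (fun ω => (X ω, A ω))
        (fun ω => (f (Q' ω), Y ω, φ (X ω), Z ω, M ω)) :=
    mutInfo_data_proc hp0 hp1 _ A (fun ω => (X ω, A ω)) _
      (fun q => q.1.2) (fun ω => rfl)
  have hnn := mutInfo_nonneg hp0 hp1 (fun ω => g (Q' ω)) A
    (fun ω => (f (Q' ω), Y ω, φ (X ω), Z ω, M ω))
  have hfin : mutInfo p (fun ω => g (Q' ω)) A
      (fun ω => (f (Q' ω), Y ω, φ (X ω), Z ω, M ω)) = 0 :=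
    le_antisymm (by linarith) hnn
  exact (mutInfo_symm hp0 _ _ _).trans hfin
end

section
/- Let X, Y_1, …, Y_D be finite random variables such that for every i < j there exists a channel (stochastic kernel) W_{i,j} with P_{Y_j|X} = W_{i,j} ∘ P_{Y_i|X} (each Y_j is a degraded version of Y_i). Then there exist random variables X', Y'_1, …, Y'_D on the same respective alphabets such that (X', Y'_ℓ) has the same joint distribution as (X, Y_ℓ) for every ℓ ∈ [D], and X' → Y'_1 → Y'_2 → ⋯ → Y'_D forms a Markov chain. -/
open scoped Classical

/-- Probability `P[X = x]`, with the `Fintype` instance on the sample space explicit. -/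
noncomputable def prE {Ω α : Type} (F : Fintype Ω) (p : Ω → ℝ) (X : Ω → α) (x : α) : ℝ :=
  F.elems.sum fun ω => if X ω = x then p ω else 0

/-- Shannon conditional entropy `H(X | Y)`, with the sample-space `Fintype` explicit. -/
noncomputable def condEntE {Ω α β : Type} (F : Fintype Ω) [Fintype α] [Fintype β]
    (p : Ω → ℝ) (X : Ω → α) (Y : Ω → β) : ℝ :=
  -∑ x : α, ∑ y : β, prE F p (fun ω => (X ω, Y ω)) (x, y) *
      Real.log (prE F p (fun ω => (X ω, Y ω)) (x, y) / prE F p Y y)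

/-- Conditional mutual information `I(X ; Y | Z)`, with the sample-space `Fintype` explicit. -/
noncomputable def mutInfoE {Ω α β γ : Type} (F : Fintype Ω)
    [Fintype α] [Fintype β] [Fintype γ]
    (p : Ω → ℝ) (X : Ω → α) (Y : Ω → β) (Z : Ω → γ) : ℝ :=
  condEntE F p X Z - condEntE F p X (fun ω => (Y ω, Z ω))

/-!
Glue the degradations into a single chain: draw `(X', Y'₁)` from `P_{X,Y₁}` and then each
`Y'_{k+1}` from `Y'_k` through the channel `W_{k,k+1}`. This is a Markov chain by construction,
and its marginals are right by induction on `ℓ`: if `(X', Y'_ℓ)` has law `P_{X,Y_ℓ}`, then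
`(X', Y'_{ℓ+1})` has law `P_{X,Y_ℓ} ∘ W_{ℓ,ℓ+1} = P_{X,Y_{ℓ+1}}`. Both facts rest on one
computation: in a product of stochastic kernels, the coordinates beyond `m` sum out of any
function of the first `m` coordinates.
-/

open Finset Function

theorem sum_pi_eq_of_sum_update_eq {ι : Type*} [Fintype ι] [DecidableEq ι] {β : ι → Type*}
    [∀ j, Fintype (β j)] (i : ι) {G G' : (∀ j, β j) → ℝ}
    (h : ∀ g, ∑ b, G (update g i b) = ∑ b, G' (update g i b)) :
    ∑ g, G g = ∑ g, G' g := by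
  set e := Equiv.piSplitAt i β
  have split (H : (∀ j, β j) → ℝ) :
      ∑ g, H g = ∑ r : ∀ j : {j // j ≠ i}, β j, ∑ b, H (e.symm (b, r)) := by
    rw [← e.symm.sum_comp, Fintype.sum_prod_type, sum_comm]
  rw [split G, split G']
  refine sum_congr rfl fun r _ => ?_
  rcases isEmpty_or_nonempty (β i) with _ | ⟨⟨b₀⟩⟩
  · simp
  · have hupd (b : β i) : update (e.symm (b₀, r)) i b = e.symm (b, r) := by
      ext j
      by_cases hj : j = i
      · subst hj; simp [e]
      · simp [e, hj]
    simpa only [hupd] using h (e.symm (b₀, r))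

section Chain

variable {n : ℕ} {β : Fin (n + 1) → Type*}

abbrev ChainKernels (β : Fin (n + 1) → Type*) := (i : Fin n) → β i.castSucc → β i.succ → ℝ

noncomputable def chainWeight (K : ChainKernels β) (g : ∀ j, β j) : ℝ :=
  ∏ i, K i (g i.castSucc) (g i.succ)

/-- From level `m` on, the kernels are replaced by point masses at `d`. These ignore their input,
so each coordinate past `m` occurs in a single factor of the chain weight and can be summed out. -/
noncomputable def truncateKernels (d : ∀ j, β j) (K : ChainKernels β) (m : ℕ) : ChainKernels β :=
  fun i => if (i : ℕ) < m then K i else fun _ (b : β i.succ) => if b = d i.succ then 1 else 0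

theorem chainWeight_eq_mul_prod_erase (K : ChainKernels β) (i : Fin n) (g : ∀ j, β j) :
    chainWeight K g
      = K i (g i.castSucc) (g i.succ) * ∏ k ∈ univ.erase i, K k (g k.castSucc) (g k.succ) :=
  (mul_prod_erase _ _ (mem_univ i)).symm

theorem truncateKernels_of_le {K : ChainKernels β} (d : ∀ j, β j) {m : ℕ} (hm : n ≤ m) :
    truncateKernels d K m = K := by
  funext i
  simp [truncateKernels, i.isLt.trans_le hm]

theorem truncateKernels_succ_of_ne {K : ChainKernels β} (d : ∀ j, β j) {i k : Fin n}
    (hk : k ≠ i) : truncateKernels d K ((i : ℕ) + 1) k = truncateKernels d K i k := by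
  have : (k : ℕ) ≠ i := fun h => hk (Fin.ext h)
  simp only [truncateKernels]
  congr 1
  exact propext (by omega)

theorem prod_erase_truncateKernels_update (K : ChainKernels β) (d : ∀ j, β j) (i : Fin n)
    (g : ∀ j, β j) (b : β i.succ) :
    ∏ k ∈ univ.erase i, truncateKernels d K i k (update g i.succ b k.castSucc)
        (update g i.succ b k.succ)
      = ∏ k ∈ univ.erase i, truncateKernels d K i k (g k.castSucc) (g k.succ) := by
  refine prod_congr rfl fun k hk => ?_
  have hki : k ≠ i := ne_of_mem_erase hk
  rw [update_of_ne fun h => hki (Fin.succ_injective _ h)]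
  simp only [truncateKernels]
  split_ifs with hk
  · rw [update_of_ne fun h => by simp [Fin.ext_iff] at h; omega]
  · rfl

variable [∀ j, Fintype (β j)] {K : ChainKernels β}

theorem sum_mul_chainWeight_truncateKernels_succ (hK : ∀ i a, ∑ b, K i a b = 1)
    (d : ∀ j, β j) (i : Fin n) {F : (∀ j, β j) → ℝ} (hF : DependsOn F {j | (j : ℕ) ≤ i}) :
    ∑ g, F g * chainWeight (truncateKernels d K ((i : ℕ) + 1)) g
      = ∑ g, F g * chainWeight (truncateKernels d K i) g := by
  refine sum_pi_eq_of_sum_update_eq i.succ fun g => ?_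
  set R := ∏ k ∈ univ.erase i, truncateKernels d K i k (g k.castSucc) (g k.succ)
  have factor (T : ChainKernels β) (hT : ∀ k ≠ i, T k = truncateKernels d K i k)
      (b : β i.succ) :
      F (update g i.succ b) * chainWeight T (update g i.succ b)
        = F g * R * T i (g i.castSucc) b := by
    have hFg : F (update g i.succ b) = F g :=
      hF fun j hj => update_of_ne (by rintro rfl; simp at hj) _ _
    rw [hFg, chainWeight_eq_mul_prod_erase T i, prod_congr rfl fun k hk => by
      rw [hT k (ne_of_mem_erase hk)], prod_erase_truncateKernels_update, update_self,
      update_of_ne (Fin.castSucc_lt_succ (i := i)).ne]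
    ring
  have hKi : truncateKernels d K ((i : ℕ) + 1) i = K i := if_pos (lt_add_one _)
  have hδi : truncateKernels d K i i = fun _ b => if b = d i.succ then 1 else 0 :=
    if_neg (lt_irrefl _)
  simp only [factor _ fun k => truncateKernels_succ_of_ne d, factor _ fun _ _ => rfl, ← mul_sum,
    hKi, hδi, hK, sum_ite_eq', mem_univ, if_true]

theorem sum_mul_chainWeight_eq_truncateKernels (hK : ∀ i a, ∑ b, K i a b = 1)
    (d : ∀ j, β j) {m : ℕ} {F : (∀ j, β j) → ℝ} (hF : DependsOn F {j | (j : ℕ) ≤ m}) :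
    ∑ g, F g * chainWeight K g = ∑ g, F g * chainWeight (truncateKernels d K m) g := by
  suffices ∀ k t, n ≤ t + k → m ≤ t →
      ∑ g, F g * chainWeight K g = ∑ g, F g * chainWeight (truncateKernels d K t) g from
    this n m (by omega) le_rfl
  intro k
  induction k with
  | zero => intro t hn _; rw [truncateKernels_of_le d (by omega)]
  | succ k ih =>
    intro t hn hmt
    rcases lt_or_ge t n with ht | ht
    · rw [ih (t + 1) (by omega) (by omega),
        sum_mul_chainWeight_truncateKernels_succ hK d ⟨t, ht⟩ (hF.mono fun j hj => le_trans hj hmt)]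
    · rw [truncateKernels_of_le d ht]

theorem sum_mul_chainWeight_congr {K' : ChainKernels β}
    (hK : ∀ i a, ∑ b, K i a b = 1) (hK' : ∀ i a, ∑ b, K' i a b = 1)
    {m : ℕ} {F : (∀ j, β j) → ℝ} (hF : DependsOn F {j | (j : ℕ) ≤ m})
    (hKK' : ∀ i : Fin n, (i : ℕ) < m → K i = K' i) :
    ∑ g, F g * chainWeight K g = ∑ g, F g * chainWeight K' g := by
  rcases isEmpty_or_nonempty (∀ j, β j) with _ | ⟨⟨d⟩⟩
  · rw [Fintype.sum_empty, Fintype.sum_empty]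
  have htrunc : truncateKernels d K m = truncateKernels d K' m := by
    funext i
    simp only [truncateKernels]
    split_ifs with hi
    · rw [hKK' i hi]
    · rfl
  rw [sum_mul_chainWeight_eq_truncateKernels hK d hF,
    sum_mul_chainWeight_eq_truncateKernels hK' d hF, htrunc]

theorem sum_ite_eval_zero_mul_chainWeight [∀ j, Nonempty (β j)] (hK : ∀ i a, ∑ b, K i a b = 1)
    (y : β 0) : ∑ g, (if g 0 = y then 1 else 0) * chainWeight K g = 1 := by
  set d : ∀ j, β j := update (fun j => Classical.arbitrary (β j)) 0 y
  have hF : DependsOn (fun g : ∀ j, β j => if g 0 = y then (1 : ℝ) else 0) {j | (j : ℕ) ≤ 0} :=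
    fun g g' h => by simp only [h 0 (by simp)]
  rw [sum_mul_chainWeight_congr (K' := fun i _ b => if b = d i.succ then 1 else 0) hK
    (fun i a => by simp) hF (fun i hi => absurd hi (Nat.not_lt_zero _))]
  have hpoint (g : ∀ j, β j) : (if g 0 = y then 1 else 0) *
      chainWeight (fun i _ b => if b = d i.succ then 1 else 0) g = if g = d then 1 else 0 := by
    rw [chainWeight, ← update_self 0 y (fun j => Classical.arbitrary (β j)),
      ← Fin.prod_univ_succ (f := fun j => if g j = d j then (1 : ℝ) else 0), prod_boole]
    simp [funext_iff]
  simp [hpoint]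

theorem sum_ite_eval_succ_mul_chainWeight (hK : ∀ i a, ∑ b, K i a b = 1) (i : Fin n)
    {F : (∀ j, β j) → ℝ} (hF : DependsOn F {j | (j : ℕ) ≤ i}) (b : β i.succ) :
    ∑ g, (if g i.succ = b then F g * chainWeight K g else 0)
      = ∑ g, F g * K i (g i.castSucc) b * chainWeight K g := by
  set K' := update K i (fun _ b' => if b' = b then 1 else 0)
  have hK' : ∀ k a, ∑ b, K' k a b = 1 := by
    intro k a
    by_cases hk : k = i
    · subst hk; simp [K']
    · simp [K', update_of_ne hk, hK]
  have hF' : DependsOn (fun g => F g * K i (g i.castSucc) b) {j | (j : ℕ) ≤ i} :=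
    fun g g' h => by simp only [hF h, h i.castSucc (by simp)]
  rw [sum_mul_chainWeight_congr hK hK' hF'
    fun k hk => (update_of_ne (fun h => (h ▸ hk).false) _ _).symm]
  refine sum_congr rfl fun g _ => ?_
  have hrest : ∏ k ∈ univ.erase i, K' k (g k.castSucc) (g k.succ)
      = ∏ k ∈ univ.erase i, K k (g k.castSucc) (g k.succ) :=
    prod_congr rfl fun k hk => by simp [K', update_of_ne (ne_of_mem_erase hk)]
  rw [chainWeight_eq_mul_prod_erase K i, chainWeight_eq_mul_prod_erase K' i, hrest]
  split_ifs with h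
  · simp [K', h]; ring
  · simp [K', h]

end Chain

section Distribution

variable {Ω α β γ : Type} [F : Fintype Ω] (p : Ω → ℝ)

theorem prE_eq_sum (X : Ω → α) (x : α) :
    prE F p X x = ∑ ω, if X ω = x then p ω else 0 := rfl

theorem prE_nonneg (hp : ∀ ω, 0 ≤ p ω) (X : Ω → α) (x : α) : 0 ≤ prE F p X x :=
  sum_nonneg fun ω _ => by split_ifs <;> simp [hp ω]

theorem prE_congr {X : Ω → α} {X' : Ω → β} {x : α} {x' : β} (h : ∀ ω, X ω = x ↔ X' ω = x') :
    prE F p X x = prE F p X' x' := by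
  simp only [prE_eq_sum, h]

theorem sum_prE [Fintype α] (X : Ω → α) : ∑ x, prE F p X x = ∑ ω, p ω := by
  simp only [prE_eq_sum]
  rw [sum_comm]
  simp

theorem sum_prE_fst [Fintype α] (A : Ω → α) (Z : Ω → γ) (z : γ) :
    ∑ a, prE F p (fun ω => (A ω, Z ω)) (a, z) = prE F p Z z := by
  simp only [prE_eq_sum, Prod.mk.injEq]
  rw [sum_comm]
  refine sum_congr rfl fun ω _ => ?_
  by_cases hz : Z ω = z <;> simp [hz]

theorem sum_prE_mul [Fintype γ] (A : Ω → α) (Z : Ω → γ) (a : α) (f : γ → ℝ) :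
    ∑ z, prE F p (fun ω => (A ω, Z ω)) (a, z) * f z
      = ∑ ω, if A ω = a then f (Z ω) * p ω else 0 := by
  simp only [prE_eq_sum, sum_mul, Prod.mk.injEq, ite_mul, zero_mul]
  rw [sum_comm]
  refine sum_congr rfl fun ω _ => ?_
  split_ifs with h <;> simp [h, mul_comm]

theorem sum_ite_mul_eq_prE_mul (X : Ω → α) (x : α) {f : Ω → ℝ} {r : ℝ}
    (hf : ∀ ω, X ω = x → f ω = r) :
    ∑ ω, (if X ω = x then f ω * p ω else 0) = prE F p X x * r := by
  rw [prE_eq_sum, sum_mul]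
  refine sum_congr rfl fun ω _ => ?_
  split_ifs with h
  · rw [hf ω h, mul_comm]
  · rw [zero_mul]

theorem mutInfoE_eq_zero_of_markov [Fintype α] [Fintype β] [Fintype γ]
    (A : Ω → α) (B : Ω → β) (C : Ω → γ) (κ : γ → β → ℝ) (hκ : ∀ c, ∑ b, κ c b = 1)
    (h : ∀ a b c, prE F p (fun ω => ((A ω, C ω), B ω)) ((a, c), b)
      = prE F p (fun ω => (A ω, C ω)) (a, c) * κ c b) :
    mutInfoE F p A B C = 0 := by
  have hABC (a b c) : prE F p (fun ω => (A ω, (B ω, C ω))) (a, (b, c))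
      = prE F p (fun ω => (A ω, C ω)) (a, c) * κ c b := by
    rw [← h]
    exact prE_congr p fun ω => by simp only [Prod.mk.injEq]; tauto
  have hBC (b c) : prE F p (fun ω => (B ω, C ω)) (b, c) = prE F p C c * κ c b := by
    rw [← sum_prE_fst p A, ← sum_prE_fst p A C, sum_mul]
    exact sum_congr rfl fun a _ => hABC a b c
  rw [mutInfoE, condEntE, condEntE, sub_eq_zero, neg_inj]
  refine sum_congr rfl fun a _ => ?_
  rw [Fintype.sum_prod_type, sum_comm]
  refine sum_congr rfl fun c _ => ?_
  have hterm (b : β) : prE F p (fun ω => (A ω, (B ω, C ω))) (a, (b, c))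
        * Real.log (prE F p (fun ω => (A ω, (B ω, C ω))) (a, (b, c))
          / prE F p (fun ω => (B ω, C ω)) (b, c))
      = prE F p (fun ω => (A ω, C ω)) (a, c)
        * Real.log (prE F p (fun ω => (A ω, C ω)) (a, c) / prE F p C c) * κ c b := by
    rw [hABC, hBC]
    rcases eq_or_ne (κ c b) 0 with hb | hb
    · simp [hb]
    · rw [mul_div_mul_right _ _ hb]; ring
  rw [sum_congr rfl fun b _ => hterm b, ← mul_sum, hκ, mul_one]

end Distribution

section Coupling

variable {α : Type} {n : ℕ} {β : Fin (n + 1) → Type} {K : ChainKernels β}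

noncomputable def couplingWeight (μ : α → β 0 → ℝ) (K : ChainKernels β) (ω : α × ∀ j, β j) : ℝ :=
  μ ω.1 (ω.2 0) * chainWeight K ω.2

theorem couplingWeight_nonneg {μ : α → β 0 → ℝ} (hμ : ∀ x y, 0 ≤ μ x y)
    (hK : ∀ i a b, 0 ≤ K i a b) (ω : α × ∀ j, β j) : 0 ≤ couplingWeight μ K ω :=
  mul_nonneg (hμ _ _) (prod_nonneg fun _ _ => hK _ _ _)

variable [Fintype α] [∀ j, Fintype (β j)]

theorem prE_couplingWeight_zero [∀ j, Nonempty (β j)] (hK : ∀ i a, ∑ b, K i a b = 1)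
    (μ : α → β 0 → ℝ) (x : α) (y : β 0) :
    prE inferInstance (couplingWeight μ K) (fun ω => (ω.1, ω.2 0)) (x, y) = μ x y := by
  simp only [prE_eq_sum, Fintype.sum_prod_type, Prod.mk.injEq]
  rw [sum_eq_single x (fun x' _ hx => sum_eq_zero fun g _ => if_neg fun h => hx h.1) (by simp),
    ← mul_one (μ x y), ← sum_ite_eval_zero_mul_chainWeight hK y, mul_sum]
  refine sum_congr rfl fun g _ => ?_
  by_cases hg : g 0 = y <;> simp [couplingWeight, hg]

theorem prE_couplingWeight_succ (hK : ∀ i a, ∑ b, K i a b = 1) (μ : α → β 0 → ℝ) (i : Fin n)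
    {γ : Type} (A : (α × ∀ j, β j) → γ)
    (hA : ∀ x, DependsOn (fun g => A (x, g)) {j | (j : ℕ) ≤ i}) (a : γ) (b : β i.succ) :
    prE inferInstance (couplingWeight μ K) (fun ω => (A ω, ω.2 i.succ)) (a, b)
      = ∑ ω, if A ω = a then K i (ω.2 i.castSucc) b * couplingWeight μ K ω else 0 := by
  rw [prE_eq_sum, Fintype.sum_prod_type, Fintype.sum_prod_type]
  refine sum_congr rfl fun x _ => ?_
  have hF : DependsOn (fun g => if A (x, g) = a then μ x (g 0) else 0) {j | (j : ℕ) ≤ i} :=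
    fun g g' h => by simp only [hA x h, h 0 (by simp)]
  refine Eq.trans ?_ ((sum_ite_eval_succ_mul_chainWeight hK i hF b).trans ?_) <;>
    refine sum_congr rfl fun g _ => ?_
  · by_cases hAx : A (x, g) = a <;> by_cases hg : g i.succ = b <;>
      simp [couplingWeight, hAx, hg]
  · by_cases hAx : A (x, g) = a <;> simp [couplingWeight, hAx]
    ring

theorem prE_couplingWeight_of_degraded [∀ j, Nonempty (β j)] (hK : ∀ i a, ∑ b, K i a b = 1)
    {Ω : Type} [FΩ : Fintype Ω] (p : Ω → ℝ) (X : Ω → α) (Y : (j : Fin (n + 1)) → Ω → β j)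
    (hdeg : ∀ i x z, prE FΩ p (fun ω => (X ω, Y i.succ ω)) (x, z)
      = ∑ y, prE FΩ p (fun ω => (X ω, Y i.castSucc ω)) (x, y) * K i y z)
    (ℓ : Fin (n + 1)) (x : α) (y : β ℓ) :
    prE inferInstance (couplingWeight (fun x y => prE FΩ p (fun ω => (X ω, Y 0 ω)) (x, y)) K)
        (fun ω => (ω.1, ω.2 ℓ)) (x, y)
      = prE FΩ p (fun ω => (X ω, Y ℓ ω)) (x, y) := by
  induction ℓ using Fin.induction generalizing x with
  | zero => exact prE_couplingWeight_zero hK _ x y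
  | succ i ih =>
    rw [prE_couplingWeight_succ hK _ i Prod.fst (fun _ _ _ _ => rfl), hdeg,
      ← sum_prE_mul _ Prod.fst (fun ω : α × ∀ j, β j => ω.2 i.castSucc) x
        (fun c => K i c y)]
    simp_rw [ih]

theorem mutInfoE_couplingWeight_eq_zero (hK : ∀ i a, ∑ b, K i a b = 1) (μ : α → β 0 → ℝ)
    (i : Fin n) {γ : Type} [Fintype γ] (A : (α × ∀ j, β j) → γ)
    (hA : ∀ x, DependsOn (fun g => A (x, g)) {j | (j : ℕ) ≤ i}) :
    mutInfoE inferInstance (couplingWeight μ K) A (fun ω => ω.2 i.succ)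
      (fun ω => ω.2 i.castSucc) = 0 := by
  refine mutInfoE_eq_zero_of_markov _ _ _ _ (K i) (hK i) fun a b c => ?_
  rw [prE_couplingWeight_succ hK μ i _ fun x g g' h => by
    rw [Prod.mk.injEq]; exact ⟨hA x h, h _ (by simp)⟩]
  exact sum_ite_mul_eq_prE_mul _ _ _ fun ω h => by rw [(Prod.mk.inj h).2]

end Coupling

/-- Degradedness implies a Markov coupling (Appendix A): if every `Y_j` with `j > i` is a
stochastically degraded version of `Y_i` (there is a channel `W` with
`P_{X,Y_j}(x,z) = ∑_y P_{X,Y_i}(x,y) W(y,z)`), then there exist random variables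
`X', Y'_1, …, Y'_D` with the same pairwise joint distributions `(X', Y'_ℓ) ~ (X, Y_ℓ)`
forming the Markov chain `X' → Y'_1 → ⋯ → Y'_D`. -/
theorem stmt16 {Ω α : Type} [FΩ : Fintype Ω] [Fintype α]
    (D : ℕ) (hD : 1 ≤ D) (β : Fin D → Type) [∀ ℓ, Fintype (β ℓ)]
    (p : Ω → ℝ) (hp0 : ∀ ω, 0 ≤ p ω) (hp1 : ∑ ω : Ω, p ω = 1)
    (X : Ω → α) (Y : (ℓ : Fin D) → Ω → β ℓ)
    (hdeg : ∀ i j : Fin D, i < j →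
      ∃ W : β i → β j → ℝ, (∀ a b, 0 ≤ W a b) ∧ (∀ a, ∑ b : β j, W a b = 1) ∧
        ∀ (x : α) (z : β j),
          prE FΩ p (fun ω => (X ω, Y j ω)) (x, z)
            = ∑ y : β i, prE FΩ p (fun ω => (X ω, Y i ω)) (x, y) * W y z) :
    ∃ (Ω' : Type) (F' : Fintype Ω') (p' : Ω' → ℝ) (X' : Ω' → α)
      (Y' : (ℓ : Fin D) → Ω' → β ℓ),
      (∀ ω', 0 ≤ p' ω') ∧ (F'.elems.sum p' = 1) ∧
      (∀ (ℓ : Fin D) (x : α) (y : β ℓ),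
        prE F' p' (fun ω' => (X' ω', Y' ℓ ω')) (x, y)
          = prE FΩ p (fun ω => (X ω, Y ℓ ω)) (x, y)) ∧
      (∀ ℓ : Fin D, 1 ≤ ℓ.val →
        mutInfoE F' p'
          (fun ω' => (X' ω', fun j : {j : Fin D // j.val + 1 < ℓ.val} => Y' j.val ω'))
          (Y' ℓ)
          (Y' ⟨ℓ.val - 1, Nat.lt_of_le_of_lt (Nat.sub_le _ _) ℓ.isLt⟩) = 0) := by
  obtain ⟨n, rfl⟩ : ∃ n, D = n + 1 := ⟨D - 1, by omega⟩
  obtain ⟨ω₀⟩ : Nonempty Ω := by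
    rw [← not_isEmpty_iff]
    intro
    simp at hp1
  have : ∀ j, Nonempty (β j) := fun j => ⟨Y j ω₀⟩
  choose W hW0 hW1 hWdeg using hdeg
  set K : ChainKernels β := fun i => W _ _ (Fin.castSucc_lt_succ (i := i))
  have hK : ∀ i a, ∑ b, K i a b = 1 := fun i => hW1 _ _ _
  have hmarg := prE_couplingWeight_of_degraded hK p X Y fun i => hWdeg _ _ _
  refine ⟨α × ∀ j, β j, inferInstance, _, Prod.fst, fun ℓ ω => ω.2 ℓ,
    couplingWeight_nonneg (fun _ _ => prE_nonneg p hp0 _ _) fun i => hW0 _ _ _, ?_, hmarg, ?_⟩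
  · change ∑ ω, _ = 1
    rw [← hp1, ← sum_prE _ (fun ω => (ω.1, ω.2 0)), ← sum_prE p (fun ω => (X ω, Y 0 ω))]
    exact Fintype.sum_congr _ _ fun v => hmarg 0 v.1 v.2
  · intro ℓ hℓ
    obtain ⟨i, rfl⟩ := Fin.exists_succ_eq.2 (Fin.pos_iff_ne_zero.1 hℓ)
    refine mutInfoE_couplingWeight_eq_zero hK _ i _ fun x g g' h => ?_
    simp only [Prod.mk.injEq, true_and]
    funext j
    have := j.2
    simp only [Fin.val_succ] at this
    exact h _ (show (j.val : ℕ) ≤ i by omega)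
end
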